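/- arXiv:1706.07669 — 8 statements merged into one kernel-verified Lean document; each statement's English description precedes it below -/
import Mathlib

section
/- For any δ > 0, any k ∈ ℕ with k ≥ 1, and any f ∈ F_k(H), the noise sensitivity satisfies NS_δ(f;H) ≤ (k−1)·δ/2. -/
open MeasureTheory Set

noncomputable section

open scoped Classical

/-- Distance between two functions under the uniform distribution on (0,1):
`P(x : f(x) ≠ g(x))`. -/
def distP {Y : Type*} (f g : ℝ → Y) : ℝ :=
  (volume {x : ℝ | x ∈ Set.Ioo (0:ℝ) 1 ∧ f x ≠ g x}).toReal

/-- Distance of `f` from a class of functions `F`: `inf_{g ∈ F} dist(f,g)`. -/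
def distToClass {Y : Type*} (f : ℝ → Y) (F : Set (ℝ → Y)) : ℝ :=
  ⨅ g : F, distP f g

/-- The zero-measure crossings property. -/
def ZeroMeasureCrossings {Y : Type*} (H : Set (ℝ → Y)) : Prop :=
  ∀ h ∈ H, ∀ h' ∈ H, h ≠ h' → volume {x : ℝ | h x = h' x} = 0

/-- `f` is a `k`-piecewise function with pieces from `H`: there are thresholds
`t 0 = -∞ ≤ t 1 ≤ ⋯ ≤ t (k-1) ≤ t k = ∞` (with `t i` real for `1 ≤ i ≤ k-1`)
and functions `h 1, …, h k ∈ H` with `f x = h i x` whenever `t (i-1) < x ≤ t i`. -/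
def Piecewise {Y : Type*} (H : Set (ℝ → Y)) (k : ℕ) (f : ℝ → Y) : Prop :=
  ∃ (t : ℕ → EReal) (h : ℕ → ℝ → Y),
    t 0 = ⊥ ∧ t k = ⊤ ∧
    (∀ i : ℕ, t i ≤ t (i + 1)) ∧
    (∀ i : ℕ, 1 ≤ i → i ≤ k - 1 → ∃ r : ℝ, t i = (r : EReal)) ∧
    (∀ i : ℕ, 1 ≤ i → i ≤ k → h i ∈ H) ∧
    (∀ x : ℝ, ∀ i : ℕ, 1 ≤ i → i ≤ k →
      t (i - 1) < (x : EReal) → (x : EReal) ≤ t i → f x = h i x)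

/-- The class `F_k(H)` of `k`-piecewise functions with pieces in `H`. -/
def Fclass {Y : Type*} (H : Set (ℝ → Y)) (k : ℕ) : Set (ℝ → Y) :=
  {f | Piecewise H k f}

/-- The instantaneous noise sensitivity `NS_δ(f, x; H)`:
`inf_{h ∈ H, h(x) = f(x)} P(h(x') ≠ f(x'))` with `x' ~ Uniform(x-δ, x+δ)`,
defined to be `1` when no `h ∈ H` has `h x = f x`. -/
def insNS {Y : Type*} (H : Set (ℝ → Y)) (δ : ℝ) (f : ℝ → Y) (x : ℝ) : ℝ :=
  if ({h : ℝ → Y | h ∈ H ∧ h x = f x}).Nonempty then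
    ⨅ h : {h : ℝ → Y | h ∈ H ∧ h x = f x},
      (volume {t : ℝ | t ∈ Set.Ioo (x - δ) (x + δ) ∧ (h : ℝ → Y) t ≠ f t}).toReal / (2 * δ)
  else 1

/-- The noise sensitivity `NS_δ(f; H) = ∫₀¹ NS_δ(f, z; H) dz`. -/
def NS {Y : Type*} (H : Set (ℝ → Y)) (δ : ℝ) (f : ℝ → Y) : ℝ :=
  ∫ z in Set.Ioo (0:ℝ) 1, insNS H δ f z

/-- The smoothed agreement function `f_δ^h(x) = (1/(2δ)) ∫_{x-δ}^{x+δ} 1[f(t) = h(t)] dt`. -/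
def smooth {Y : Type*} (δ : ℝ) (f h : ℝ → Y) (x : ℝ) : ℝ :=
  (1 / (2 * δ)) * ∫ t in (x - δ)..(x + δ), (if f t = h t then (1:ℝ) else 0)

/-- The degree-at-most-`p` polynomial function with coefficients `α`. -/
def polyFun (p : ℕ) (α : Fin (p + 1) → ℝ) : ℝ → ℝ :=
  fun x => ∑ i : Fin (p + 1), α i * x ^ (i : ℕ)

/-- A collection `C` of subsets of `Z` shatters a finite set `S`. -/
def ShattersC {Z : Type*} (C : Set (Set Z)) (S : Finset Z) : Prop :=
  ∀ T : Finset Z, T ⊆ S → ∃ c ∈ C, (S : Set Z) ∩ c = (T : Set Z)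

/-- The graph `{(x, g(x)) : x ∈ ℝ}` of a function `g : ℝ → Y`. -/
def graphOf {Y : Type*} (g : ℝ → Y) : Set (ℝ × Y) :=
  {p : ℝ × Y | p.2 = g p.1}

/-- The collection of graphs of the functions in `G`. -/
def graphs {Y : Type*} (G : Set (ℝ → Y)) : Set (Set (ℝ × Y)) :=
  {s | ∃ g ∈ G, s = graphOf g}

end

/-!
At a point `z` of the `i`-th piece, the piece `hᵢ` itself competes in the infimum defining
`NS_δ(f, z; H)`, and on the window `(z - δ, z + δ)` it can differ from `f` only beyond one of the
`k - 1` thresholds `r`, on a set of length at most the tent `(δ - |z - r|)⁺`. Hence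
`NS_δ(f, z; H) ≤ ∑_r (δ - |z - r|)⁺ / (2δ)`, and as each tent has integral `δ²`, integrating over
`z` gives `(k - 1) δ² / (2δ)`.
-/

section Tent

def tent (δ r z : ℝ) : ℝ := max 0 (δ - |z - r|)

variable (δ r : ℝ)

lemma tent_nonneg (z : ℝ) : 0 ≤ tent δ r z := le_max_left _ _

@[fun_prop]
lemma continuous_tent : Continuous (tent δ r) := by
  unfold tent; fun_prop

lemma hasCompactSupport_tent : HasCompactSupport (tent δ r) := by
  refine HasCompactSupport.intro (isCompact_Icc (a := r - δ) (b := r + δ)) fun z hz => ?_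
  have : δ ≤ |z - r| := by
    rw [mem_Icc, not_and_or, not_le, not_le] at hz
    rcases hz with hz | hz
    · rw [abs_sub_comm, le_abs]; left; linarith
    · rw [le_abs]; left; linarith
  exact max_eq_left (by linarith)

lemma integrable_tent : Integrable (tent δ r) :=
  (continuous_tent δ r).integrable_of_hasCompactSupport (hasCompactSupport_tent δ r)

lemma integral_tent (hδ : 0 ≤ δ) : ∫ z, tent δ r z = δ ^ 2 := by
  have hvanish : ∀ x ∈ Ioi 0 \ Ioc 0 δ, max 0 (δ - x) = 0 := fun x hx => max_eq_left <| by
    simp only [mem_sdiff, mem_Ioi, mem_Ioc, not_and, not_le] at hx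
    linarith [hx.2 hx.1]
  calc ∫ z, tent δ r z = ∫ z, max 0 (δ - |z|) :=
        integral_sub_right_eq_self (fun z => max 0 (δ - |z|)) r
    _ = 2 * ∫ z in Ioi 0, max 0 (δ - z) := integral_comp_abs (f := fun x => max 0 (δ - x))
    _ = 2 * ∫ z in (0)..δ, (δ - z) := by
      rw [setIntegral_eq_of_subset_of_forall_sdiff_eq_zero measurableSet_Ioi
        Ioc_subset_Ioi_self hvanish, ← intervalIntegral.integral_of_le hδ]
      congr 1
      refine intervalIntegral.integral_congr fun z hz => max_eq_right ?_
      rw [uIcc_of_le hδ] at hz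
      linarith [hz.2]
    _ = δ ^ 2 := by
      rw [intervalIntegral.integral_sub intervalIntegrable_const
        intervalIntegral.intervalIntegrable_id, intervalIntegral.integral_const, integral_id]
      simp only [smul_eq_mul]; ring

end Tent

lemma volume_window_separated_le (δ r z : ℝ) :
    volume {x | x ∈ Ioo (z - δ) (z + δ) ∧ ¬(x ≤ r ↔ z ≤ r)} ≤ ENNReal.ofReal (tent δ r z) := by
  rcases le_or_gt z r with hzr | hrz
  · calc _ ≤ volume (Ioo r (z + δ)) := measure_mono <| by
          rintro x ⟨hx, hsep⟩
          exact ⟨lt_of_not_ge fun h => hsep (iff_of_true h hzr), hx.2⟩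
      _ = ENNReal.ofReal (z + δ - r) := Real.volume_Ioo
      _ ≤ _ := ENNReal.ofReal_le_ofReal <| by
          rw [tent, abs_of_nonpos (by linarith)]; exact le_max_of_le_right (by linarith)
  · calc _ ≤ volume (Ioc (z - δ) r) := measure_mono <| by
          rintro x ⟨hx, hsep⟩
          exact ⟨hx.1, by_contra fun h => hsep (iff_of_false h hrz.not_ge)⟩
      _ = ENNReal.ofReal (r - (z - δ)) := Real.volume_Ioc
      _ ≤ _ := ENNReal.ofReal_le_ofReal <| by
          rw [tent, abs_of_pos (by linarith)]; exact le_max_of_le_right (by linarith)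

section NoiseSensitivity

variable {Y : Type*} {H : Set (ℝ → Y)} {δ : ℝ} {f : ℝ → Y}

lemma insNS_nonneg (hδ : 0 ≤ δ) (z : ℝ) : 0 ≤ insNS H δ f z := by
  unfold insNS
  split_ifs
  · exact Real.iInf_nonneg fun _ => by positivity
  · exact zero_le_one

lemma insNS_le_of_mem (hδ : 0 ≤ δ) {h : ℝ → Y} (hh : h ∈ H) {z : ℝ} (hz : h z = f z) :
    insNS H δ f z ≤ (volume {x | x ∈ Ioo (z - δ) (z + δ) ∧ h x ≠ f x}).toReal / (2 * δ) := by
  have hmem : h ∈ {h | h ∈ H ∧ h z = f z} := ⟨hh, hz⟩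
  rw [insNS, if_pos ⟨h, hmem⟩]
  exact ciInf_le ⟨0, by rintro _ ⟨g, rfl⟩; positivity⟩ (⟨h, hmem⟩ : {h | h ∈ H ∧ h z = f z})

lemma insNS_le_sum_tent (hδ : 0 ≤ δ) {ι : Type*} (s : Finset ι) (r : ι → ℝ) {z : ℝ}
    (hcell : ∃ h ∈ H, ∀ x, (∀ j ∈ s, (x ≤ r j ↔ z ≤ r j)) → f x = h x) :
    insNS H δ f z ≤ (∑ j ∈ s, tent δ (r j) z) / (2 * δ) := by
  obtain ⟨h, hh, hagree⟩ := hcell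
  refine (insNS_le_of_mem hδ hh (hagree z fun _ _ => Iff.rfl).symm).trans ?_
  gcongr
  refine ENNReal.toReal_le_of_le_ofReal (Finset.sum_nonneg fun j _ => tent_nonneg δ (r j) z) ?_
  have hsub : {x | x ∈ Ioo (z - δ) (z + δ) ∧ h x ≠ f x} ⊆
      ⋃ j ∈ s, {x | x ∈ Ioo (z - δ) (z + δ) ∧ ¬(x ≤ r j ↔ z ≤ r j)} := by
    rintro x ⟨hx, hne⟩
    obtain ⟨j, hj, hsep⟩ : ∃ j ∈ s, ¬(x ≤ r j ↔ z ≤ r j) := by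
      by_contra! hall
      exact hne (hagree x hall).symm
    exact mem_biUnion hj ⟨hx, hsep⟩
  calc _ ≤ _ := measure_mono hsub
    _ ≤ ∑ j ∈ s, volume {x | x ∈ Ioo (z - δ) (z + δ) ∧ ¬(x ≤ r j ↔ z ≤ r j)} :=
        measure_biUnion_finset_le s _
    _ ≤ ∑ j ∈ s, ENNReal.ofReal (tent δ (r j) z) :=
        Finset.sum_le_sum fun j _ => volume_window_separated_le δ (r j) z
    _ = ENNReal.ofReal (∑ j ∈ s, tent δ (r j) z) :=
        (ENNReal.ofReal_sum_of_nonneg fun j _ => tent_nonneg δ (r j) z).symm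

lemma NS_le_integral (hδ : 0 ≤ δ) {g : ℝ → ℝ} (hg : Integrable g)
    (hle : ∀ z, insNS H δ f z ≤ g z) : NS H δ f ≤ ∫ z, g z :=
  (integral_mono_of_nonneg (ae_of_all _ (insNS_nonneg hδ)) hg.integrableOn
    (ae_of_all _ hle)).trans <|
    setIntegral_le_integral hg (ae_of_all _ fun z => (insNS_nonneg hδ z).trans (hle z))

end NoiseSensitivity

lemma Piecewise.exists_cells {Y : Type*} {H : Set (ℝ → Y)} {k : ℕ} {f : ℝ → Y}
    (hf : Piecewise H k f) : ∃ r : ℕ → ℝ, ∀ z, ∃ h ∈ H,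
      ∀ x, (∀ j ∈ Finset.Icc 1 (k - 1), (x ≤ r j ↔ z ≤ r j)) → f x = h x := by
  obtain ⟨t, h, ht0, htk, -, htreal, hH, hpiece⟩ := hf
  choose! r hr using htreal
  refine ⟨r, fun z => ?_⟩
  have hex : ∃ i, (z : EReal) ≤ t i := ⟨k, htk ▸ le_top⟩
  set i := Nat.find hex
  have hi0 : i ≠ 0 := fun h0 => EReal.coe_ne_bot z (le_bot_iff.1 (ht0 ▸ h0 ▸ Nat.find_spec hex))
  have hik : i ≤ k := Nat.find_min' hex (htk ▸ le_top)
  refine ⟨h i, hH i (by omega) hik, fun x hx => ?_⟩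
  have hside : ∀ j ≤ k, ((x : EReal) ≤ t j ↔ (z : EReal) ≤ t j) := by
    intro j hj
    rcases Nat.eq_zero_or_pos j with rfl | hj0
    · simp [ht0]
    rcases eq_or_lt_of_le hj with rfl | hjk
    · simp [htk]
    rw [hr j hj0 (by omega), EReal.coe_le_coe_iff, EReal.coe_le_coe_iff]
    exact hx j (Finset.mem_Icc.2 ⟨hj0, by omega⟩)
  apply hpiece x i (by omega) hik
  · rw [← not_le, hside _ (by omega)]
    exact Nat.find_min hex (show i - 1 < i by omega)
  · exact (hside i hik).2 (Nat.find_spec hex)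

theorem noise_sensitivity_of_piecewise_le_general
    {Y : Type*}
    (H : Set (ℝ → Y))
    (δ : ℝ) (hδ : 0 < δ) (k : ℕ) (hk : 1 ≤ k)
    (f : ℝ → Y) (hf : f ∈ Fclass H k) :
    NS H δ f ≤ ((k : ℝ) - 1) * δ / 2 := by
  obtain ⟨r, hcell⟩ := Piecewise.exists_cells hf
  have hint : Integrable fun z => (∑ j ∈ Finset.Icc 1 (k - 1), tent δ (r j) z) / (2 * δ) :=
    (integrable_finsetSum _ fun j _ => integrable_tent δ (r j)).div_const _
  calc NS H δ f ≤ ∫ z, (∑ j ∈ Finset.Icc 1 (k - 1), tent δ (r j) z) / (2 * δ) :=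
        NS_le_integral hδ.le hint fun z => insNS_le_sum_tent hδ.le _ r (hcell z)
    _ = (k - 1 : ℕ) * δ ^ 2 / (2 * δ) := by
        rw [integral_div, integral_finsetSum _ fun j _ => integrable_tent δ (r j)]
        simp [integral_tent _ _ hδ.le]
    _ = ((k : ℝ) - 1) * δ / 2 := by
        rw [Nat.cast_sub hk]
        field_simp
        ring

/-- For any `δ > 0`, `k ≥ 1`, and `f ∈ F_k(H)`,
`NS_δ(f; H) ≤ (k-1)·δ/2`. -/
theorem noise_sensitivity_of_piecewise_le
    {Y : Type*} [MeasurableSpace Y] [MeasurableSingletonClass Y] [Nonempty Y]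
    (H : Set (ℝ → Y)) (hHne : H.Nonempty) (hHmeas : ∀ h ∈ H, Measurable h)
    (hzmc : ZeroMeasureCrossings H)
    (δ : ℝ) (hδ : 0 < δ) (k : ℕ) (hk : 1 ≤ k)
    (f : ℝ → Y) (hf : f ∈ Fclass H k) :
    NS H δ f ≤ ((k : ℝ) - 1) * δ / 2 :=
  noise_sensitivity_of_piecewise_le_general H δ hδ k hk f hf
end

section
/- Fix δ > 0, a measurable f : ℝ → Y, and x ∈ ℝ. For any finite set S ⊆ H of pairwise distinct functions, Σ_{h ∈ S} f_δ^h(x) ≤ 1. In particular, at most one h ∈ H has f_δ^h(x) > 1/2. -/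
open MeasureTheory Set

/-!
Two distinct functions of `H` agree only on a null set, so for almost every `t` at most one
`h ∈ S` agrees with `f` at `t`. Hence `∑_{h ∈ S} 1[f(t) = h(t)] ≤ 1` almost everywhere, and
integrating over `(x - δ, x + δ]` gives `∑_{h ∈ S} f_δ^h(x) ≤ 1`. The integrals are compared
through lower Lebesgue integrals, which bound the Bochner integrals of nonnegative functions and
are superadditive for arbitrary integrands.
-/

namespace MeasureTheory

variable {α : Type*} [MeasurableSpace α] {μ : Measure α}

theorem sum_lintegral_le_lintegral_sum {ι : Type*} (S : Finset ι) (F : ι → α → ENNReal) :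
    ∑ i ∈ S, ∫⁻ a, F i a ∂μ ≤ ∫⁻ a, ∑ i ∈ S, F i a ∂μ := by
  classical
  induction S using Finset.induction with
  | empty => simp
  | insert i S hi ih =>
    simp only [Finset.sum_insert hi]
    exact (add_le_add_right ih _).trans (le_lintegral_add _ _)

variable {Y : Type*}

open scoped Classical

theorem ae_card_filter_eq_apply_le_one {S : Finset (α → Y)}
    (hS : (S : Set (α → Y)).Pairwise fun h h' => ∀ᵐ a ∂μ, h a ≠ h' a) (f : α → Y) :
    ∀ᵐ a ∂μ, (S.filter fun h : α → Y => f a = h a).card ≤ 1 := by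
  have hS' : ∀ᵐ a ∂μ, ∀ h ∈ S, ∀ h' ∈ S, h ≠ h' → h a ≠ h' a := by
    refine Filter.eventually_all_finset S |>.mpr fun h hh => ?_
    refine Filter.eventually_all_finset S |>.mpr fun h' hh' => ?_
    by_cases hne : h = h'
    · simp [hne]
    · filter_upwards [hS hh hh' hne] with a ha _ using ha
  filter_upwards [hS'] with a ha
  refine Finset.card_le_one.mpr fun h hh h' hh' => ?_
  rw [Finset.mem_filter] at hh hh'
  by_contra hne
  exact ha h hh.1 h' hh'.1 hne (hh.2.symm.trans hh'.2)

theorem sum_integral_agree_le_measureReal_univ [IsFiniteMeasure μ] {S : Finset (α → Y)}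
    (hS : (S : Set (α → Y)).Pairwise fun h h' => ∀ᵐ a ∂μ, h a ≠ h' a) (f : α → Y) :
    ∑ h ∈ S, ∫ a, (if f a = h a then (1 : ℝ) else 0) ∂μ ≤ μ.real Set.univ := by
  set F : (α → Y) → α → ENNReal := fun h a => if f a = h a then 1 else 0
  have hsum_F : ∑ h ∈ S, ∫⁻ a, F h a ∂μ ≤ μ Set.univ :=
    calc ∑ h ∈ S, ∫⁻ a, F h a ∂μ ≤ ∫⁻ a, ∑ h ∈ S, F h a ∂μ :=
          sum_lintegral_le_lintegral_sum S F
      _ ≤ ∫⁻ _, 1 ∂μ := lintegral_mono_ae <| by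
          filter_upwards [ae_card_filter_eq_apply_le_one hS f] with a ha
          simp only [F, Finset.sum_boole]
          exact_mod_cast ha
      _ = μ Set.univ := lintegral_one
  calc ∑ h ∈ S, ∫ a, (if f a = h a then (1 : ℝ) else 0) ∂μ
      ≤ ∑ h ∈ S, (∫⁻ a, F h a ∂μ).toReal := Finset.sum_le_sum fun h _ => by
        refine (Real.le_norm_self _).trans ((norm_integral_le_lintegral_norm _).trans_eq ?_)
        congr 2 with a
        by_cases hfa : f a = h a <;> simp [F, hfa]
    _ = (∑ h ∈ S, ∫⁻ a, F h a ∂μ).toReal := (ENNReal.toReal_sum fun h hh => ne_top_of_le_ne_top (measure_ne_top μ _)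
        ((Finset.single_le_sum (fun _ _ => zero_le) hh).trans hsum_F)).symm
    _ ≤ μ.real Set.univ := ENNReal.toReal_mono (measure_ne_top μ _) hsum_F

end MeasureTheory

theorem sum_smooth_le_one_general
    {Y : Type*}
    (H : Set (ℝ → Y))
    (hzmc : ZeroMeasureCrossings H)
    (δ : ℝ) (hδ : 0 < δ) (f : ℝ → Y) (x : ℝ) :
    (∀ S : Finset (ℝ → Y), ↑S ⊆ H → ∑ h ∈ S, smooth δ f h x ≤ 1) ∧
    (∀ h ∈ H, ∀ h' ∈ H, 1 / 2 < smooth δ f h x → 1 / 2 < smooth δ f h' x → h = h') := by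
  classical
  have hsum : ∀ S : Finset (ℝ → Y), ↑S ⊆ H → ∑ h ∈ S, smooth δ f h x ≤ 1 := by
    intro S hS
    have hS_ae : (S : Set (ℝ → Y)).Pairwise fun h h' =>
        ∀ᵐ t ∂volume.restrict (Set.Ioc (x - δ) (x + δ)), h t ≠ h' t :=
      fun h hh h' hh' hne => ae_restrict_of_ae <| ae_iff.mpr <| by
        simpa using hzmc h (hS hh) h' (hS hh') hne
    have hle : x - δ ≤ x + δ := by linarith
    have := sum_integral_agree_le_measureReal_univ hS_ae f
    rw [measureReal_restrict_apply_univ, Real.volume_real_Ioc_of_le hle] at this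
    simp only [smooth, ← Finset.mul_sum, intervalIntegral.integral_of_le hle]
    calc 1 / (2 * δ) * _ ≤ 1 / (2 * δ) * (x + δ - (x - δ)) := by gcongr
      _ = 1 := by field_simp; ring
  refine ⟨hsum, fun h hh h' hh' h_half h'_half => ?_⟩
  by_contra hne
  have := hsum {h, h'} (by simp [Set.insert_subset_iff, hh, hh'])
  rw [Finset.sum_pair hne] at this
  linarith

/-- For any finite set `S ⊆ H`, `Σ_{h ∈ S} f_δ^h(x) ≤ 1`; in particular,
at most one `h ∈ H` has `f_δ^h(x) > 1/2`. -/
theorem sum_smooth_le_one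
    {Y : Type*} [MeasurableSpace Y] [MeasurableSingletonClass Y] [Nonempty Y]
    (H : Set (ℝ → Y)) (hHne : H.Nonempty) (hHmeas : ∀ h ∈ H, Measurable h)
    (hzmc : ZeroMeasureCrossings H)
    (δ : ℝ) (hδ : 0 < δ) (f : ℝ → Y) (hf : Measurable f) (x : ℝ) :
    (∀ S : Finset (ℝ → Y), ↑S ⊆ H → ∑ h ∈ S, smooth δ f h x ≤ 1) ∧
    (∀ h ∈ H, ∀ h' ∈ H, 1 / 2 < smooth δ f h x → 1 / 2 < smooth δ f h' x → h = h') :=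
  sum_smooth_le_one_general H hzmc δ hδ f x
end

section
/- Fix δ > 0, a measurable f : ℝ → Y, and x ∈ ℝ. Then the supremum sup_{h ∈ H} f_δ^h(x) is attained: there exists h ∈ H with f_δ^h(x) = sup_{h' ∈ H} f_δ^{h'}(x). -/
open MeasureTheory Set

/-!
The agreement sets `{t | f t = h t}` of distinct `h ∈ H` overlap only in null sets, so the window
`[x - δ, x + δ]` of length `2δ` has room for fewer than `2δ / c` of them of measure larger than `c`.
Hence for every `c > 0` only finitely many `h` satisfy `f_δ^h(x) > c`; if the supremum `s` is
positive, it is the maximum over the finitely many `h` with `f_δ^h(x) > s / 2`, and if `s = 0`,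
every `h` attains it.
-/

open scoped Classical in
noncomputable def agreement {α Y : Type*} (f h : α → Y) (t : α) : ℝ :=
  if f t = h t then 1 else 0

section Agreement

variable {α Y : Type*} (f : α → Y)

theorem sum_agreement_le_one (T : Finset (α → Y)) {t : α}
    (ht : ∀ h ∈ T, ∀ h' ∈ T, h ≠ h' → h t ≠ h' t) : ∑ h ∈ T, agreement f h t ≤ 1 := by
  unfold agreement
  rw [Finset.sum_boole, Nat.cast_le_one, Finset.card_le_one]
  intro h hh h' hh'
  simp only [Finset.mem_filter] at hh hh'
  by_contra hne
  exact ht h hh.1 h' hh'.1 hne (hh.2.symm.trans hh'.2)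

variable [MeasurableSpace α] {μ : Measure α}

theorem integral_agreement_nonneg (h : α → Y) : 0 ≤ ∫ t, agreement f h t ∂μ :=
  integral_nonneg fun t => by unfold agreement; split_ifs <;> norm_num

theorem sum_integral_agreement_le [IsFiniteMeasure μ] (T : Finset (α → Y))
    (hT : ∀ h ∈ T, ∀ h' ∈ T, h ≠ h' → μ {t | h t = h' t} = 0)
    (hint : ∀ h ∈ T, Integrable (agreement f h) μ) :
    ∑ h ∈ T, ∫ t, agreement f h t ∂μ ≤ μ.real univ := by
  have hsep : ∀ᵐ t ∂μ, ∀ h ∈ T, ∀ h' ∈ T, h ≠ h' → h t ≠ h' t := by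
    simp only [Filter.eventually_all_finset]
    intro h hh h' hh'
    by_cases hne : h = h'
    · exact .of_forall fun _ hne' => (hne' hne).elim
    · filter_upwards [measure_eq_zero_iff_ae_notMem.mp (hT h hh h' hh' hne)] with t ht _
      exact ht
  calc ∑ h ∈ T, ∫ t, agreement f h t ∂μ = ∫ t, ∑ h ∈ T, agreement f h t ∂μ :=
        (integral_finsetSum T hint).symm
    _ ≤ ∫ _, (1 : ℝ) ∂μ :=
        integral_mono_ae (integrable_finsetSum T hint) (integrable_const 1)
          (hsep.mono fun t ht => sum_agreement_le_one f T ht)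
    _ = μ.real univ := by simp

theorem finite_setOf_lt_integral_agreement [IsFiniteMeasure μ] (H : Set (α → Y))
    (hH : ∀ h ∈ H, ∀ h' ∈ H, h ≠ h' → μ {t | h t = h' t} = 0) {c : ℝ} (hc : 0 < c) :
    {h ∈ H | c < ∫ t, agreement f h t ∂μ}.Finite := by
  by_contra hinf
  obtain ⟨T, hTS, hTcard⟩ := Set.Infinite.exists_subset_card_eq hinf (⌈μ.real univ / c⌉₊ + 1)
  have hlt : μ.real univ < T.card * c := by
    rw [hTcard, ← div_lt_iff₀ hc]
    push_cast
    linarith [Nat.le_ceil (μ.real univ / c)]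
  have hle : T.card * c ≤ ∑ h ∈ T, ∫ t, agreement f h t ∂μ := by
    simpa using Finset.card_nsmul_le_sum T _ c fun h hh => (hTS hh).2.le
  -- The agreement sets need not be measurable; integrability comes from the nonzero integral.
  have hsum := sum_integral_agreement_le f T
    (fun h hh h' hh' => hH h (hTS hh).1 h' (hTS hh').1)
    (fun h hh => Integrable.of_integral_ne_zero (hc.trans (hTS hh).2).ne')
  linarith

end Agreement

theorem exists_eq_ciSup_of_finite_setOf_lt {ι : Type*} [Nonempty ι] {φ : ι → ℝ}
    (hφ : ∀ i, 0 ≤ φ i) (hfin : ∀ c > 0, {i | c < φ i}.Finite) : ∃ i, φ i = ⨆ j, φ j := by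
  have hbdd : BddAbove (range φ) := by
    refine ((bddAbove_Iic (a := 1)).union ((hfin 1 one_pos).image φ).bddAbove).mono ?_
    rintro _ ⟨i, rfl⟩
    exact (le_or_gt (φ i) 1).imp id (mem_image_of_mem φ)
  obtain ⟨i₀⟩ := ‹Nonempty ι›
  rcases ((hφ i₀).trans (le_ciSup hbdd i₀)).eq_or_lt with hs | hs
  · exact ⟨i₀, le_antisymm (le_ciSup hbdd i₀) (hs ▸ hφ i₀)⟩
  obtain ⟨j, hj⟩ := exists_lt_of_lt_ciSup (half_lt_self hs)
  obtain ⟨i, hi, himax⟩ := exists_max_image _ φ (hfin _ (half_pos hs)) ⟨j, hj⟩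
  refine ⟨i, le_antisymm (le_ciSup hbdd i) (ciSup_le fun k => ?_)⟩
  by_cases hk : (⨆ j, φ j) / 2 < φ k
  · exact himax k hk
  · exact (not_lt.mp hk).trans hi.le

theorem smooth_eq_integral_agreement {Y : Type*} {δ : ℝ} (hδ : 0 < δ) (f h : ℝ → Y) (x : ℝ) :
    smooth δ f h x =
      (1 / (2 * δ)) * ∫ t, agreement f h t ∂volume.restrict (Ioc (x - δ) (x + δ)) := by
  rw [smooth, intervalIntegral.integral_of_le (by linarith)]
  rfl

theorem smooth_nonneg {Y : Type*} {δ : ℝ} (hδ : 0 < δ) (f h : ℝ → Y) (x : ℝ) :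
    0 ≤ smooth δ f h x := by
  rw [smooth_eq_integral_agreement hδ]
  exact mul_nonneg (by positivity) (integral_agreement_nonneg f h)

theorem finite_setOf_lt_smooth {Y : Type*} {H : Set (ℝ → Y)} (hH : ZeroMeasureCrossings H)
    {δ : ℝ} (hδ : 0 < δ) (f : ℝ → Y) (x : ℝ) {c : ℝ} (hc : 0 < c) :
    {h ∈ H | c < smooth δ f h x}.Finite := by
  have hcross : ∀ h ∈ H, ∀ h' ∈ H, h ≠ h' →
      volume.restrict (Ioc (x - δ) (x + δ)) {t | h t = h' t} = 0 :=
    fun h hh h' hh' hne =>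
      nonpos_iff_eq_zero.mp ((Measure.restrict_apply_le _ _).trans_eq (hH h hh h' hh' hne))
  refine (finite_setOf_lt_integral_agreement f H hcross (c := 2 * δ * c) (by positivity)).subset ?_
  rintro h ⟨hh, hlt⟩
  rw [smooth_eq_integral_agreement hδ, one_div, lt_inv_mul_iff₀ (by positivity)] at hlt
  exact ⟨hh, hlt⟩

theorem smooth_sup_attained_general
    {Y : Type*}
    (H : Set (ℝ → Y)) (hHne : H.Nonempty)
    (hzmc : ZeroMeasureCrossings H)
    (δ : ℝ) (hδ : 0 < δ) (f : ℝ → Y) (x : ℝ) :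
    ∃ h ∈ H, smooth δ f h x = ⨆ h' : H, smooth δ f h' x := by
  have : Nonempty H := hHne.to_subtype
  obtain ⟨⟨h, hh⟩, hsup⟩ := exists_eq_ciSup_of_finite_setOf_lt (φ := fun h : H => smooth δ f h x)
    (fun h => smooth_nonneg hδ f h x)
    fun c hc => ((finite_setOf_lt_smooth hzmc hδ f x hc).preimage
      Subtype.val_injective.injOn).subset fun h hlt => ⟨h.2, hlt⟩
  exact ⟨h, hh, hsup⟩

/-- The supremum `sup_{h ∈ H} f_δ^h(x)` is attained by some `h ∈ H`. -/
theorem smooth_sup_attained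
    {Y : Type*} [MeasurableSpace Y] [MeasurableSingletonClass Y] [Nonempty Y]
    (H : Set (ℝ → Y)) (hHne : H.Nonempty) (hHmeas : ∀ h ∈ H, Measurable h)
    (hzmc : ZeroMeasureCrossings H)
    (δ : ℝ) (hδ : 0 < δ) (f : ℝ → Y) (hf : Measurable f) (x : ℝ) :
    ∃ h ∈ H, smooth δ f h x = ⨆ h' : H, smooth δ f h' x :=
  smooth_sup_attained_general H hHne hzmc δ hδ f x
end

section
/- Fix δ > 0, τ ∈ (0,1/2), a measurable f : ℝ → Y, and distinct h, h' ∈ H. If x, z ∈ ℝ satisfy f_δ^h(x) ≥ 1−τ and f_δ^{h'}(z) ≥ 1−τ, then |x − z| ≥ 2δ(1−2τ). -/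
open MeasureTheory Set

open scoped Classical

/-!
Write `I = (x - δ, x + δ]` and `J = (z - δ, z + δ]`. Off the null set `{h = h'}`, `f` agrees with
at most one of `h`, `h'`, so the agreement indicators satisfy `1[f = h] + 1[f = h'] ≤ 1` a.e., and
`∫_I 1[f = h] + ∫_J 1[f = h'] ≤ λ(I ∪ J) ≤ 2δ + |x - z|`. The hypotheses bound the left side
below by `2 · 2δ(1 - τ)`.
-/

theorem setIntegral_add_setIntegral_le_measureReal_union {α : Type*} [MeasurableSpace α]
    {μ : Measure α} {u v : α → ℝ} {s t : Set α} (hs : MeasurableSet s) (ht : MeasurableSet t)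
    (hst : μ (s ∪ t) ≠ ⊤) (hu : IntegrableOn u s μ) (hv : IntegrableOn v t μ)
    (hu0 : ∀ a, 0 ≤ u a) (hv0 : ∀ a, 0 ≤ v a) (huv : ∀ᵐ a ∂μ, u a + v a ≤ 1) :
    ∫ a in s, u a ∂μ + ∫ a in t, v a ∂μ ≤ μ.real (s ∪ t) := by
  have hpointwise : ∀ᵐ a ∂μ, s.indicator u a + t.indicator v a ≤ (s ∪ t).indicator 1 a := by
    filter_upwards [huv] with a ha
    have hua := hu0 a
    have hva := hv0 a
    by_cases has : a ∈ s <;> by_cases hat : a ∈ t <;> simp [indicator, has, hat] <;> linarith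
  have hone : Integrable ((s ∪ t).indicator (1 : α → ℝ)) μ :=
    (integrableOn_const hst).integrable_indicator (hs.union ht)
  rw [← integral_indicator hs, ← integral_indicator ht, ← integral_indicator_one (hs.union ht),
    ← integral_add (hu.integrable_indicator hs) (hv.integrable_indicator ht)]
  exact integral_mono_ae ((hu.integrable_indicator hs).add (hv.integrable_indicator ht)) hone
    hpointwise

theorem ae_ite_eq_add_ite_eq_le_one {α Y : Type*} [MeasurableSpace α] {μ : Measure α}
    {f h h' : α → Y} (hcross : μ {t | h t = h' t} = 0) :
    ∀ᵐ t ∂μ, (if f t = h t then (1 : ℝ) else 0) + (if f t = h' t then 1 else 0) ≤ 1 := by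
  have hne : ∀ᵐ t ∂μ, h t ≠ h' t := measure_eq_zero_iff_ae_notMem.mp hcross
  filter_upwards [hne] with t ht
  split_ifs with h₁ h₂ <;> first | exact absurd (h₁.symm.trans h₂) ht | norm_num

theorem volume_real_Ioc_union_Ioc_le {δ : ℝ} (hδ : 0 ≤ δ) (x z : ℝ) :
    volume.real (Ioc (x - δ) (x + δ) ∪ Ioc (z - δ) (z + δ)) ≤ 2 * δ + |x - z| := by
  have hsub : Ioc (x - δ) (x + δ) ∪ Ioc (z - δ) (z + δ) ⊆ Ioc (min x z - δ) (max x z + δ) :=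
    union_subset
      (Ioc_subset_Ioc (by linarith [min_le_left x z]) (by linarith [le_max_left x z]))
      (Ioc_subset_Ioc (by linarith [min_le_right x z]) (by linarith [le_max_right x z]))
  calc _ ≤ volume.real (Ioc (min x z - δ) (max x z + δ)) :=
        measureReal_mono hsub measure_Ioc_lt_top.ne
    _ = 2 * δ + |x - z| := by
      rw [Real.volume_real_Ioc_of_le (by linarith [min_le_max (a := x) (b := z)]),
        ← max_sub_min_eq_abs']
      ring

theorem two_mul_mul_smooth {Y : Type*} {δ : ℝ} (hδ : 0 < δ) (f h : ℝ → Y) (x : ℝ) :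
    2 * δ * smooth δ f h x = ∫ t in Ioc (x - δ) (x + δ), if f t = h t then (1 : ℝ) else 0 := by
  rw [smooth, intervalIntegral.integral_of_le (by linarith), ← mul_assoc,
    mul_one_div_cancel (by positivity), one_mul]

/-- `{t | f t = h t}` need not be measurable, so integrability is read off from the value: the
Bochner integral of a non-integrable function is `0`. -/
theorem integrableOn_of_smooth_pos {Y : Type*} {δ : ℝ} (hδ : 0 < δ) {f h : ℝ → Y} {x : ℝ}
    (hpos : 0 < smooth δ f h x) :
    IntegrableOn (fun t => if f t = h t then (1 : ℝ) else 0) (Ioc (x - δ) (x + δ)) := by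
  by_contra hint
  have hzero := two_mul_mul_smooth hδ f h x
  rw [integral_undef hint] at hzero
  nlinarith

theorem smooth_high_points_far_general
    {Y : Type*}
    (H : Set (ℝ → Y))
    (hzmc : ZeroMeasureCrossings H)
    (δ : ℝ) (hδ : 0 < δ) (τ : ℝ) (hτ : τ ∈ Set.Ioo (0:ℝ) (1/2))
    (f : ℝ → Y)
    (h h' : ℝ → Y) (hh : h ∈ H) (hh' : h' ∈ H) (hne : h ≠ h')
    (x z : ℝ) (hx : 1 - τ ≤ smooth δ f h x) (hz : 1 - τ ≤ smooth δ f h' z) :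
    2 * δ * (1 - 2 * τ) ≤ |x - z| := by
  have hτ1 : 0 < 1 - τ := by linarith [hτ.2]
  have hagree := setIntegral_add_setIntegral_le_measureReal_union measurableSet_Ioc
    measurableSet_Ioc (measure_union_lt_top measure_Ioc_lt_top measure_Ioc_lt_top).ne
    (integrableOn_of_smooth_pos hδ (hτ1.trans_le hx))
    (integrableOn_of_smooth_pos hδ (hτ1.trans_le hz))
    (fun t => by split_ifs <;> norm_num) (fun t => by split_ifs <;> norm_num)
    (ae_ite_eq_add_ite_eq_le_one (f := f) (hzmc h hh h' hh' hne))
  rw [← two_mul_mul_smooth hδ, ← two_mul_mul_smooth hδ] at hagree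
  have hunion := volume_real_Ioc_union_Ioc_le hδ.le x z
  nlinarith

/-- If `h ≠ h'` in `H`, `f_δ^h(x) ≥ 1-τ`, and `f_δ^{h'}(z) ≥ 1-τ` for
`τ ∈ (0, 1/2)`, then `|x - z| ≥ 2δ(1-2τ)`. -/
theorem smooth_high_points_far
    {Y : Type*} [MeasurableSpace Y] [MeasurableSingletonClass Y] [Nonempty Y]
    (H : Set (ℝ → Y)) (hHne : H.Nonempty) (hHmeas : ∀ h ∈ H, Measurable h)
    (hzmc : ZeroMeasureCrossings H)
    (δ : ℝ) (hδ : 0 < δ) (τ : ℝ) (hτ : τ ∈ Set.Ioo (0:ℝ) (1/2))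
    (f : ℝ → Y) (hf : Measurable f)
    (h h' : ℝ → Y) (hh : h ∈ H) (hh' : h' ∈ H) (hne : h ≠ h')
    (x z : ℝ) (hx : 1 - τ ≤ smooth δ f h x) (hz : 1 - τ ≤ smooth δ f h' z) :
    2 * δ * (1 - 2 * τ) ≤ |x - z| :=
  smooth_high_points_far_general H hzmc δ hδ τ hτ f h h' hh hh' hne x z hx hz
end

section
/- For any m, k ∈ ℕ with 1 ≤ k ≤ m+1 and any g ∈ F_{m+1}(H), we have dist(g, F_k(H)) ≤ ((m+1) − k)/(m+1). -/
open MeasureTheory Set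

/-!
Let `I₁, …, I_{m+1}` be the pieces of `g`, with masses `w₁, …, w_{m+1}` in `(0, 1)` summing to at
most `1`. By averaging, some `m + 1 - k` of them have total mass at most `(m + 1 - k)/(m + 1)`.
Cutting only at the right ends of the `k` remaining pieces (but the last) gives a `k`-piece
function that uses, on each new piece, the function of the remaining old piece it ends with; it
agrees with `g` outside the dropped pieces.
-/

open MeasureTheory Set
open scoped Finset

theorem Finset.exists_subset_card_eq_card_mul_sum_le {ι : Type*} [DecidableEq ι] (w : ι → ℝ)
    (F : Finset ι) : ∀ j ≤ #F, ∃ D ⊆ F, #D = j ∧ #F * ∑ i ∈ D, w i ≤ j * ∑ i ∈ F, w i := by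
  induction F using Finset.induction_on_max_value w with
  | empty => intro j hj; exact ⟨∅, empty_subset _, (Nat.le_zero.mp hj).symm, by simp⟩
  | insert a F haF hmax ih =>
    intro j hj
    rw [card_insert_of_notMem haF] at hj ⊢
    rcases hj.lt_or_eq with hj | rfl
    · obtain ⟨D, hDF, hDcard, hD⟩ := ih j (Nat.lt_succ_iff.mp hj)
      have hDa : ∑ i ∈ D, w i ≤ j * w a := by
        simpa [hDcard] using sum_le_card_nsmul D w (w a) fun i hi => hmax i (hDF hi)
      refine ⟨D, hDF.trans (subset_insert a F), hDcard, ?_⟩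
      rw [sum_insert haF]
      push_cast
      linarith
    · exact ⟨insert a F, Subset.rfl, card_insert_of_notMem haF, by push_cast; rfl⟩

def piece (t : ℕ → EReal) (i : ℕ) : Set ℝ :=
  (↑) ⁻¹' Ioc (t (i - 1)) (t i)

noncomputable def pieceIndex (t : ℕ → EReal) (x : ℝ) : ℕ :=
  sInf {i | (x : EReal) ≤ t i}

theorem measurableSet_piece (t : ℕ → EReal) (i : ℕ) : MeasurableSet (piece t i) :=
  measurableSet_Ioc.preimage continuous_coe_real_ereal.measurable

section Pieces

variable {t : ℕ → EReal}

open Function in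
theorem pairwise_disjoint_piece (ht : Monotone t) : Pairwise (Disjoint on (piece t)) := by
  refine (pairwise_disjoint_on _).mpr fun i j hij => Set.disjoint_left.mpr ?_
  rintro x ⟨-, hxi⟩ ⟨hxj, -⟩
  exact (hxi.trans (ht (Nat.le_sub_one_of_lt hij))).not_gt hxj

theorem sum_measureReal_piece_le (ht : Monotone t) (μ : Measure ℝ) [IsFiniteMeasure μ]
    (F : Finset ℕ) : ∑ i ∈ F, μ.real (piece t i) ≤ μ.real univ :=
  sum_measureReal_le_measureReal_univ (fun i _ => measurableSet_piece t i)
    ((pairwise_disjoint_piece ht).set_pairwise _)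

theorem pieceIndex_eq_of_mem_piece (ht : Monotone t) {i : ℕ} {x : ℝ} (hx : x ∈ piece t i) :
    pieceIndex t x = i := by
  refine le_antisymm (Nat.sInf_le hx.2) (le_of_not_gt fun hlt => ?_)
  have hmem : pieceIndex t x ∈ {i | (x : EReal) ≤ t i} := Nat.sInf_mem ⟨i, hx.2⟩
  exact (hmem.trans (ht (Nat.le_sub_one_of_lt hlt))).not_gt hx.1

variable {K : ℕ} (ht0 : t 0 = ⊥) (htK : t K = ⊤)
include ht0 htK

theorem mem_piece_pieceIndex (x : ℝ) : x ∈ piece t (pieceIndex t x) := by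
  have hne : {i | (x : EReal) ≤ t i}.Nonempty := ⟨K, show (x : EReal) ≤ t K from htK ▸ le_top⟩
  refine ⟨?_, Nat.sInf_mem hne⟩
  rcases Nat.eq_zero_or_pos (pieceIndex t x) with h0 | hpos
  · have := Nat.sInf_mem hne
    simp_all [pieceIndex]
  · exact lt_of_not_ge (Nat.notMem_of_lt_sInf (Nat.sub_lt hpos one_pos))

theorem pieceIndex_mem_Icc (x : ℝ) : pieceIndex t x ∈ Finset.Icc 1 K := by
  have hxK : (x : EReal) ≤ t K := htK ▸ le_top
  refine Finset.mem_Icc.mpr ⟨Nat.pos_of_ne_zero fun h0 => ?_, Nat.sInf_le hxK⟩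
  have := (mem_piece_pieceIndex ht0 htK x).2
  simp_all

theorem setOf_ne_subset_biUnion_piece {Y : Type*} {f g : ℝ → Y} {D : Finset ℕ}
    (hfg : ∀ i ∈ Finset.Icc 1 K \ D, EqOn f g (piece t i)) :
    {x | f x ≠ g x} ⊆ ⋃ i ∈ D, piece t i := fun x hx =>
  mem_iUnion₂.mpr ⟨_, by_contra fun hiD => hx <| hfg _
    (Finset.mem_sdiff.mpr ⟨pieceIndex_mem_Icc ht0 htK x, hiD⟩) (mem_piece_pieceIndex ht0 htK x),
    mem_piece_pieceIndex ht0 htK x⟩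

end Pieces

theorem piecewise_pieceIndex {Y : Type*} {H : Set (ℝ → Y)} {k : ℕ} {s : ℕ → EReal}
    {q : ℕ → ℝ → Y} (hs0 : s 0 = ⊥) (hsk : s k = ⊤) (hs : ∀ j, s j ≤ s (j + 1))
    (hs_real : ∀ j, 1 ≤ j → j ≤ k - 1 → ∃ r : ℝ, s j = r) (hq : ∀ j, 1 ≤ j → j ≤ k → q j ∈ H) :
    Piecewise H k (fun x => q (pieceIndex s x) x) :=
  ⟨s, q, hs0, hsk, hs, hs_real, hq, fun x _ _ _ hlo hhi =>
    congrArg (q · x) (pieceIndex_eq_of_mem_piece (monotone_nat_of_le_succ hs) ⟨hlo, hhi⟩)⟩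

theorem exists_strictMonoOn_image_Icc_eq (S : Finset ℕ) (hS : 0 ∉ S) :
    ∃ σ : ℕ → ℕ, StrictMonoOn σ (Iic #S) ∧ σ 0 = 0 ∧ σ '' Icc 1 #S = S := by
  have hfin : (Set.ofPred (· ∈ insert 0 S)).Finite := (insert 0 S).finite_toSet
  have hcard : #hfin.toFinset = #S + 1 := by
    rw [show hfin.toFinset = insert 0 S from Finset.finite_toSet_toFinset _,
      Finset.card_insert_of_notMem hS]
  set σ := Nat.nth (· ∈ insert 0 S)
  have hσ0 : σ 0 = 0 := by simp [σ]
  have hσ : StrictMonoOn σ (Iic #S) := by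
    convert Nat.nth_strictMonoOn hfin using 1
    rw [hcard, ← Order.Iio_succ]
    rfl
  have hσ_pos : ∀ j ∈ Icc 1 #S, 0 < σ j := fun j hj =>
    hσ0 ▸ hσ (Nat.zero_le _) hj.2 hj.1
  refine ⟨σ, hσ, hσ0, Subset.antisymm ?_ fun i hi => ?_⟩
  · rintro _ ⟨j, hj, rfl⟩
    have hmem : σ j ∈ insert 0 S :=
      Nat.nth_mem_of_lt_card hfin (by rw [hcard]; exact Nat.lt_succ_of_le hj.2)
    exact (Finset.mem_insert.mp hmem).resolve_left (hσ_pos j hj).ne'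
  · obtain ⟨j, hj, rfl⟩ := Nat.exists_lt_card_finite_nth_eq hfin (Finset.mem_insert_of_mem hi)
    refine ⟨j, ⟨Nat.pos_of_ne_zero fun h0 => ?_, by omega⟩, rfl⟩
    exact hS (by simpa [h0, σ] using hi)

theorem exists_piecewise_eqOn_piece {Y : Type*} {H : Set (ℝ → Y)} {K : ℕ} {t : ℕ → EReal}
    {h : ℕ → ℝ → Y} (ht0 : t 0 = ⊥) (ht : Monotone t)
    (ht_real : ∀ i, 1 ≤ i → i ≤ K - 1 → ∃ r : ℝ, t i = r) (hh : ∀ i, 1 ≤ i → i ≤ K → h i ∈ H)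
    {S : Finset ℕ} (hS : S ⊆ Finset.Icc 1 K) (hS_pos : 1 ≤ #S) :
    ∃ f ∈ Fclass H #S, ∀ i ∈ S, EqOn f (h i) (piece t i) := by
  obtain ⟨σ, hσ, hσ0, hσS⟩ := exists_strictMonoOn_image_Icc_eq S fun h0 => by simpa using hS h0
  set k := #S
  have hσK : ∀ j ∈ Icc 1 k, σ j ∈ Finset.Icc 1 K := fun j hj =>
    hS (by rw [← Finset.mem_coe, ← hσS]; exact mem_image_of_mem σ hj)
  have hσ_mono : ∀ {i j}, i ≤ j → j ≤ k → σ i ≤ σ j := fun hij hj =>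
    hσ.monotoneOn (hij.trans hj) hj hij
  set s : ℕ → EReal := fun j => if j < k then t (σ j) else ⊤
  have hs_succ : ∀ j, s j ≤ s (j + 1) := by
    intro j
    simp only [s]
    split_ifs with hj hj'
    · exact ht (hσ_mono j.le_succ hj'.le)
    · exact le_top
    · omega
    · exact le_rfl
  refine ⟨fun x => h (σ (pieceIndex s x)) x,
    piecewise_pieceIndex (q := fun j => h (σ j)) ?_ ?_ hs_succ ?_ ?_, ?_⟩
  · simp [s, hσ0, ht0, Nat.one_le_iff_ne_zero.mp hS_pos]
  · simp [s]
  · intro j hj1 hjk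
    have hσk := Finset.mem_Icc.mp (hσK k ⟨hS_pos, le_rfl⟩)
    have hσj : σ j < σ k := hσ (show j ≤ k by omega) (show k ≤ k from le_rfl) (by omega)
    have hσj1 := (Finset.mem_Icc.mp (hσK j ⟨hj1, by omega⟩)).1
    simp only [s, if_pos (show j < k by omega)]
    exact ht_real (σ j) hσj1 (by omega)
  · intro j hj1 hjk
    obtain ⟨hσj1, hσjK⟩ := Finset.mem_Icc.mp (hσK j ⟨hj1, hjk⟩)
    exact hh (σ j) hσj1 hσjK
  · intro i hi x hx
    obtain ⟨j, ⟨hj1, hjk⟩, rfl⟩ : i ∈ σ '' Icc 1 k := hσS ▸ hi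
    have hlo : s (j - 1) < x := by
      have hσj : σ (j - 1) < σ j := hσ (show j - 1 ≤ k by omega) hjk (by omega)
      simp only [s, if_pos (show j - 1 < k by omega)]
      exact (ht (Nat.le_sub_one_of_lt hσj)).trans_lt hx.1
    have hhi : (x : EReal) ≤ s j := by
      simp only [s]
      split_ifs
      exacts [hx.2, le_top]
    simp only
    rw [pieceIndex_eq_of_mem_piece (monotone_nat_of_le_succ hs_succ) ⟨hlo, hhi⟩]

theorem distP_eq_measureReal {Y : Type*} (f g : ℝ → Y) :
    distP f g = (volume.restrict (Ioo (0 : ℝ) 1)).real {x | f x ≠ g x} := by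
  rw [distP, measureReal_def, Measure.restrict_apply' measurableSet_Ioo]
  congr 2
  ext x
  exact and_comm

theorem distToClass_le_distP {Y : Type*} {F : Set (ℝ → Y)} {f : ℝ → Y} (g : ℝ → Y) (hf : f ∈ F) :
    distToClass g F ≤ distP g f :=
  ciInf_le ⟨0, by rintro _ ⟨_, rfl⟩; exact ENNReal.toReal_nonneg⟩ (⟨f, hf⟩ : F)

theorem dist_piecewise_to_fewer_pieces_general
    {Y : Type*} (H : Set (ℝ → Y))
    (m k : ℕ) (hk1 : 1 ≤ k) (hk2 : k ≤ m + 1)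
    (g : ℝ → Y) (hg : g ∈ Fclass H (m + 1)) :
    distToClass g (Fclass H k) ≤ (((m : ℝ) + 1) - k) / ((m : ℝ) + 1) := by
  obtain ⟨t, h, ht0, htK, ht_succ, ht_real, hh, hgh⟩ := hg
  have ht := monotone_nat_of_le_succ ht_succ
  set μ := volume.restrict (Ioo (0 : ℝ) 1)
  set F := Finset.Icc 1 (m + 1)
  have hFcard : #F = m + 1 := by simp [F]
  obtain ⟨D, hDF, hDcard, hD⟩ := F.exists_subset_card_eq_card_mul_sum_le
    (fun i => μ.real (piece t i)) (m + 1 - k) (by omega)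
  have hScard : #(F \ D) = k := by rw [Finset.card_sdiff_of_subset hDF, hDcard, hFcard]; omega
  obtain ⟨f, hf, hfh⟩ := exists_piecewise_eqOn_piece ht0 ht ht_real hh Finset.sdiff_subset
    (hScard ▸ hk1)
  have hgf : ∀ i ∈ F \ D, EqOn g f (piece t i) := fun i hi x hx => by
    obtain ⟨hi1, hi2⟩ := Finset.mem_Icc.mp (Finset.mem_sdiff.mp hi).1
    exact (hgh x i hi1 hi2 hx.1 hx.2).trans (hfh i hi hx).symm
  have hF : ∑ i ∈ F, μ.real (piece t i) ≤ 1 :=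
    (sum_measureReal_piece_le ht μ F).trans (by simp [μ])
  calc distToClass g (Fclass H k) ≤ distP g f := distToClass_le_distP g (hScard ▸ hf)
    _ = μ.real {x | g x ≠ f x} := distP_eq_measureReal g f
    _ ≤ μ.real (⋃ i ∈ D, piece t i) :=
      measureReal_mono (setOf_ne_subset_biUnion_piece ht0 htK hgf) (measure_ne_top μ _)
    _ ≤ ∑ i ∈ D, μ.real (piece t i) := measureReal_biUnion_finset_le D _
    _ ≤ (((m : ℝ) + 1) - k) / ((m : ℝ) + 1) := by
      rw [le_div_iff₀ (by positivity)]
      rw [hFcard, Nat.cast_sub hk2] at hD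
      push_cast at hD
      have hkm : (0 : ℝ) ≤ m + 1 - k := sub_nonneg.mpr (by exact_mod_cast hk2)
      nlinarith [mul_le_mul_of_nonneg_left hF hkm]

/-- For any `m, k ∈ ℕ` with `1 ≤ k ≤ m+1` and `g ∈ F_{m+1}(H)`,
`dist(g, F_k(H)) ≤ ((m+1) - k)/(m+1)`. -/
theorem dist_piecewise_to_fewer_pieces
    {Y : Type*} [MeasurableSpace Y] [Nonempty Y]
    (H : Set (ℝ → Y)) (hHne : H.Nonempty)
    (m k : ℕ) (hk1 : 1 ≤ k) (hk2 : k ≤ m + 1)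
    (g : ℝ → Y) (hg : g ∈ Fclass H (m + 1)) :
    distToClass g (Fclass H k) ≤ (((m : ℝ) + 1) - k) / ((m : ℝ) + 1) :=
  dist_piecewise_to_fewer_pieces_general H m k hk1 hk2 g hg
end

section
/- Suppose H has finite graph dimension d with 0 < d < ∞, and let k ∈ ℕ with k ≥ 1. For any n ∈ ℕ with n ≥ max(d, k), any n distinct points x₁, …, x_n ∈ ℝ, and any values y₁, …, y_n ∈ Y, the number of distinct sets of the form {(x, g(x)) : x ∈ ℝ} ∩ {(x₁,y₁), …, (x_n,y_n)} realized by functions g ∈ F_k(H) is at most (en/d)^{dk} · (en/k)^{k}. -/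
open MeasureTheory Set

/-!
On the sample points, a `k`-piecewise function agrees with a single piece on each of at most `k`
blocks of consecutive points. Its trace is therefore determined by the set of block maxima (at
most `k` points, ranking every point by how many maxima lie strictly below it) together with the
traces of the `k` pieces. Sauer–Shelah bounds the number of candidate sets of block maxima by
`∑_{j ≤ k} C(n, j) ≤ (en/k)^k`, and the number of traces of `H` by `∑_{i ≤ d} C(n, i) ≤ (en/d)^d`.
-/

open Finset Function

theorem sum_choose_le_exp_one_mul_div_pow {n d : ℕ} (hd : 1 ≤ d) (hdn : d ≤ n) :
    ∑ i ∈ Iic d, (n.choose i : ℝ) ≤ (Real.exp 1 * n / d) ^ d := by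
  have hn : (0 : ℝ) < n := by exact_mod_cast hd.trans hdn
  set q : ℝ := d / n with hq
  have hq0 : 0 < q := by positivity
  have hq1 : q ≤ 1 := (div_le_one hn).2 (by exact_mod_cast hdn)
  have key : q ^ d * ∑ i ∈ Iic d, (n.choose i : ℝ) ≤ Real.exp d :=
    calc q ^ d * ∑ i ∈ Iic d, (n.choose i : ℝ)
        ≤ ∑ i ∈ Iic d, q ^ i * n.choose i := by
          rw [mul_sum]
          exact sum_le_sum fun i hi => mul_le_mul_of_nonneg_right
            (pow_le_pow_of_le_one hq0.le hq1 (mem_Iic.1 hi)) (Nat.cast_nonneg _)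
      _ ≤ ∑ i ∈ range (n + 1), q ^ i * n.choose i :=
          sum_le_sum_of_subset_of_nonneg
            (fun i hi => mem_range_succ_iff.2 ((mem_Iic.1 hi).trans hdn))
            (fun i _ _ => by positivity)
      _ = (q + 1) ^ n := by rw [add_pow]; simp only [one_pow, mul_one]
      _ ≤ Real.exp q ^ n := by gcongr; exact Real.add_one_le_exp q
      _ = Real.exp d := by rw [← Real.exp_nat_mul, hq, mul_div_cancel₀ _ hn.ne']
  calc ∑ i ∈ Iic d, (n.choose i : ℝ) ≤ Real.exp d / q ^ d := by
        rw [le_div_iff₀' (by positivity)]; exact key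
    _ = (Real.exp 1 * n / d) ^ d := by
        rw [hq, div_pow, div_pow, mul_pow, Real.exp_one_pow]
        field_simp

namespace Finset

variable {α : Type*} [DecidableEq α] [Fintype α]

theorem card_le_sum_choose_of_vcDim_le {𝒜 : Finset (Finset α)} {d : ℕ} (h : 𝒜.vcDim ≤ d) :
    #𝒜 ≤ ∑ i ∈ Iic d, (Fintype.card α).choose i :=
  (card_le_card_shatterer 𝒜).trans <|
    card_shatterer_le_sum_vcDim.trans <| sum_le_sum_of_subset (Iic_subset_Iic.2 h)

theorem vcDim_filter_card_le (k : ℕ) : (univ.filter fun s : Finset α => #s ≤ k).vcDim ≤ k :=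
  Finset.sup_le fun _ hs =>
    let ⟨_, ht, hst⟩ := (mem_shatterer.1 hs).exists_superset
    (card_le_card hst).trans (mem_filter.1 ht).2

end Finset

section Rank

variable {ι α β : Type*} [Fintype ι] [LinearOrder α] [LinearOrder β]

def rankBelow (x : ι → α) (B : Finset ι) (i : ι) : ℕ :=
  #(B.filter fun b => x b < x i)

theorem Monotone.exists_rankBelow {ℓ : α → β} (hℓ : Monotone ℓ) {x : ι → α} (hx : Injective x) :
    ∃ B : Finset ι, Set.InjOn (ℓ ∘ x) B ∧ (∀ i, rankBelow x B i < #B) ∧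
      ∀ i j, rankBelow x B i = rankBelow x B j → ℓ (x i) = ℓ (x j) := by
  -- the maxima of the blocks on which `ℓ ∘ x` is constant
  set B := univ.filter fun b => ∀ i, ℓ (x i) = ℓ (x b) → x i ≤ x b
  have exists_max : ∀ i, ∃ b ∈ B, ℓ (x b) = ℓ (x i) ∧ x i ≤ x b := by
    intro i
    obtain ⟨b, hb, hmax⟩ :=
      (univ.filter fun j => ℓ (x j) = ℓ (x i)).exists_max_image x ⟨i, by simp⟩
    simp only [mem_filter, Finset.mem_univ, true_and] at hb hmax
    exact ⟨b, mem_filter.2 ⟨Finset.mem_univ _, fun j hj => hmax j (hj.trans hb)⟩, hb, hmax i rfl⟩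
  have rankBelow_lt : ∀ i j, ℓ (x i) < ℓ (x j) → rankBelow x B i < rankBelow x B j := by
    intro i j hij
    obtain ⟨b, hbB, hb, hib⟩ := exists_max i
    refine card_lt_card <| (Finset.ssubset_iff_of_subset fun c hc => ?_).2 ⟨b, ?_, ?_⟩
    · rw [mem_filter] at hc ⊢
      exact ⟨hc.1, hc.2.trans (hℓ.reflect_lt hij)⟩
    · exact mem_filter.2 ⟨hbB, hℓ.reflect_lt (hb ▸ hij)⟩
    · exact fun hb' => (mem_filter.1 hb').2.not_ge hib
  refine ⟨B, fun b hb b' hb' h => ?_, fun i => ?_, fun i j h => ?_⟩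
  · exact hx <| le_antisymm ((mem_filter.1 hb').2 b h) ((mem_filter.1 hb).2 b' h.symm)
  · obtain ⟨b, hbB, -, hib⟩ := exists_max i
    exact card_lt_card <| filter_ssubset.2 ⟨b, hbB, hib.not_gt⟩
  · by_contra hne
    rcases lt_or_gt_of_ne hne with hij | hij
    · exact (rankBelow_lt i j hij).ne h
    · exact (rankBelow_lt j i hij).ne' h

theorem card_le_card_mul_pow_of_monotone_selection [DecidableEq ι] [Nonempty ι] {x : ι → α}
    (hx : Injective x) {s : Finset β} {𝒜 𝔗 : Finset (Finset ι)}
    (h𝔗 : ∀ T ∈ 𝔗, ∃ ℓ : α → β, Monotone ℓ ∧ (∀ a, ℓ a ∈ s) ∧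
      ∃ A : β → Finset ι, (∀ j ∈ s, A j ∈ 𝒜) ∧ ∀ i, i ∈ T ↔ i ∈ A (ℓ (x i))) :
    #𝔗 ≤ #(univ.filter fun B : Finset ι => #B ≤ #s) * #𝒜 ^ #s := by
  let encode : Finset ι × (Fin #s → Finset ι) → Finset ι := fun BF =>
    univ.filter fun i => ∃ r : Fin #s, (r : ℕ) = rankBelow x BF.1 i ∧ i ∈ BF.2 r
  have h𝔗_sub : 𝔗 ⊆ ((univ.filter fun B : Finset ι => #B ≤ #s) ×ˢ
      Fintype.piFinset fun _ => 𝒜).image encode := by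
    intro T hT
    obtain ⟨ℓ, hℓ, hℓs, A, hA, hTA⟩ := h𝔗 T hT
    obtain ⟨B, hinj, hlt, heq⟩ := hℓ.exists_rankBelow hx
    have hB : #B ≤ #s := card_le_card_of_injOn (ℓ ∘ x) (fun _ _ => hℓs _) hinj
    -- the `r`-th block is read off any point of rank `r`
    let rep : Fin #s → ι := fun r => Classical.epsilon fun i => rankBelow x B i = r
    refine mem_image.2 ⟨(B, fun r => A (ℓ (x (rep r)))), mem_product.2
      ⟨mem_filter.2 ⟨Finset.mem_univ _, hB⟩, Fintype.mem_piFinset.2 fun r => hA _ (hℓs _)⟩, ?_⟩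
    ext i
    simp only [encode, mem_filter, Finset.mem_univ, true_and, hTA]
    constructor
    · rintro ⟨r, hr, hi⟩
      rwa [heq _ i ((Classical.epsilon_spec (p := fun j => rankBelow x B j = r) ⟨i, hr.symm⟩).trans
        hr)] at hi
    · intro hi
      refine ⟨⟨rankBelow x B i, (hlt i).trans_le hB⟩, rfl, ?_⟩
      rwa [heq _ i (Classical.epsilon_spec (p := fun j => rankBelow x B j = rankBelow x B i)
        ⟨i, rfl⟩)]
  calc #𝔗 ≤ #(((univ.filter fun B : Finset ι => #B ≤ #s) ×ˢ
        Fintype.piFinset fun _ => 𝒜).image encode) := card_le_card h𝔗_sub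
    _ ≤ _ := card_image_le
    _ = _ := by rw [card_product, Fintype.card_piFinset, prod_const, card_univ, Fintype.card_fin]

end Rank

section Trace

open scoped Classical

variable {ι Z : Type*} [Fintype ι]

noncomputable def traceFamily (P : ι → Z) (C : Set (Set Z)) : Finset (Finset ι) :=
  univ.filter fun A => ∃ c ∈ C, A = univ.filter fun i => P i ∈ c

theorem ncard_inter_range_le_card_traceFamily (P : ι → Z) (C : Set (Set Z)) :
    {E | ∃ c ∈ C, E = c ∩ range P}.ncard ≤ #(traceFamily P C) := by
  have hsub : {E | ∃ c ∈ C, E = c ∩ range P} ⊆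
      (fun A : Finset ι => P '' A) '' traceFamily P C := by
    rintro _ ⟨c, hc, rfl⟩
    refine ⟨univ.filter fun i => P i ∈ c, by simpa [traceFamily] using ⟨c, hc, rfl⟩, ?_⟩
    simp only [coe_filter, Finset.mem_univ, true_and]
    exact image_preimage_eq_inter_range
  calc _ ≤ ((fun A : Finset ι => P '' A) '' traceFamily P C).ncard := ncard_le_ncard hsub
    _ ≤ (traceFamily P C : Set (Finset ι)).ncard := ncard_image_le (toFinite _)
    _ = #(traceFamily P C) := ncard_coe_finset _

theorem vcDim_traceFamily_le [DecidableEq ι] {P : ι → Z} (hP : Injective P) {C : Set (Set Z)}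
    {d : ℕ} (hC : ∀ S : Finset Z, ShattersC C S → #S ≤ d) : (traceFamily P C).vcDim ≤ d := by
  refine Finset.sup_le fun s hs => ?_
  rw [← Finset.card_image_of_injective s hP]
  refine hC _ fun T hT => ?_
  obtain ⟨u, hus, rfl⟩ := subset_image_iff.1 hT
  obtain ⟨_, hA, hsA⟩ := mem_shatterer.1 hs hus
  obtain ⟨c, hc, rfl⟩ := (mem_filter.1 hA).2
  refine ⟨c, hc, ?_⟩
  rw [← hsA]
  ext z
  simp only [coe_image, coe_inter, coe_filter, Set.mem_inter_iff, Set.mem_image, mem_coe,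
    Finset.mem_univ, true_and, Set.mem_ofPred_eq]
  constructor
  · rintro ⟨⟨i, hi, rfl⟩, hic⟩
    exact ⟨i, ⟨hi, hic⟩, rfl⟩
  · rintro ⟨i, ⟨hi, hic⟩, rfl⟩
    exact ⟨⟨i, hi, rfl⟩, hic⟩

end Trace

theorem Piecewise.exists_monotone_index {Y : Type*} {H : Set (ℝ → Y)} {k : ℕ} {g : ℝ → Y}
    (hg : Piecewise H k g) :
    ∃ ℓ : ℝ → ℕ, Monotone ℓ ∧ (∀ a, ℓ a ∈ Finset.Icc 1 k) ∧
      ∃ h : ℕ → ℝ → Y, (∀ j ∈ Finset.Icc 1 k, h j ∈ H) ∧ ∀ a, g a = h (ℓ a) a := by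
  obtain ⟨t, h, ht0, htk, -, -, hH, hg⟩ := hg
  have hk : 1 ≤ k := Nat.one_le_iff_ne_zero.2 fun hk0 => by simp [hk0, ht0] at htk
  -- the index of the piece containing `a`
  let ℓ : ℝ → ℕ := fun a => sInf {j | 1 ≤ j ∧ (a : EReal) ≤ t j}
  have hk_mem : ∀ a : ℝ, k ∈ {j | 1 ≤ j ∧ (a : EReal) ≤ t j} := fun a => ⟨hk, htk ▸ le_top⟩
  have hℓ_mem : ∀ a, 1 ≤ ℓ a ∧ (a : EReal) ≤ t (ℓ a) := fun a => Nat.sInf_mem ⟨k, hk_mem a⟩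
  have hℓ_lt : ∀ a : ℝ, t (ℓ a - 1) < a := by
    intro a
    rcases (hℓ_mem a).1.eq_or_lt with h1 | h1
    · rw [← h1, Nat.sub_self, ht0]
      exact EReal.bot_lt_coe a
    · have := Nat.notMem_of_lt_sInf (show ℓ a - 1 < ℓ a by omega)
      exact lt_of_not_ge fun hle => this ⟨by omega, hle⟩
  have hℓ_mono : Monotone ℓ := fun a b hab =>
    Nat.sInf_le ⟨(hℓ_mem b).1, le_trans (by exact_mod_cast hab) (hℓ_mem b).2⟩
  refine ⟨ℓ, hℓ_mono, fun a => Finset.mem_Icc.2 ⟨(hℓ_mem a).1, Nat.sInf_le (hk_mem a)⟩, h,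
    fun j hj => hH j (Finset.mem_Icc.1 hj).1 (Finset.mem_Icc.1 hj).2, fun a => ?_⟩
  exact hg a (ℓ a) (hℓ_mem a).1 (Nat.sInf_le (hk_mem a)) (hℓ_lt a) (hℓ_mem a).2

open scoped Classical in
theorem exists_monotone_selection_of_mem_traceFamily_Fclass {Y : Type*} {H : Set (ℝ → Y)}
    {k n : ℕ} {x : Fin n → ℝ} {y : Fin n → Y} {T : Finset (Fin n)}
    (hT : T ∈ traceFamily (fun i => (x i, y i)) (graphs (Fclass H k))) :
    ∃ ℓ : ℝ → ℕ, Monotone ℓ ∧ (∀ a, ℓ a ∈ Finset.Icc 1 k) ∧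
      ∃ A : ℕ → Finset (Fin n),
        (∀ j ∈ Finset.Icc 1 k, A j ∈ traceFamily (fun i => (x i, y i)) (graphs H)) ∧
        ∀ i, i ∈ T ↔ i ∈ A (ℓ (x i)) := by
  obtain ⟨_, ⟨g, hg, rfl⟩, rfl⟩ := (mem_filter.1 hT).2
  obtain ⟨ℓ, hℓ, hℓk, h, hH, hgh⟩ := Piecewise.exists_monotone_index hg
  refine ⟨ℓ, hℓ, hℓk, fun j => univ.filter fun i => (x i, y i) ∈ graphOf (h j),
    fun j hj => mem_filter.2 ⟨Finset.mem_univ _, _, ⟨h j, hH j hj, rfl⟩, rfl⟩, ?_⟩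
  intro i
  simp only [Finset.mem_filter, Finset.mem_univ, true_and]
  simp [graphOf, hgh]

theorem growth_of_piecewise_class_general
    {Y : Type*}
    (H : Set (ℝ → Y))
    (d : ℕ) (hd : 0 < d)
    (hdim_le : ∀ S : Finset (ℝ × Y), ShattersC (graphs H) S → S.card ≤ d)
    (k : ℕ) (hk : 1 ≤ k)
    (n : ℕ) (hn : max d k ≤ n)
    (x : Fin n → ℝ) (hx : Function.Injective x) (y : Fin n → Y) :
    (({E : Set (ℝ × Y) | ∃ g ∈ Fclass H k,
        E = graphOf g ∩ Set.range (fun i => (x i, y i))}.ncard : ℝ))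
      ≤ (Real.exp 1 * n / d) ^ (d * k) * (Real.exp 1 * n / k) ^ k := by
  have hdn : d ≤ n := le_of_max_le_left hn
  have hkn : k ≤ n := le_of_max_le_right hn
  have : Nonempty (Fin n) := ⟨⟨0, hd.trans_le hdn⟩⟩
  set P : Fin n → ℝ × Y := fun i => (x i, y i)
  have hP : Injective P := fun i j h => hx (congrArg Prod.fst h)
  have hcount : {E | ∃ g ∈ Fclass H k, E = graphOf g ∩ range P}.ncard ≤
      (∑ j ∈ Iic k, n.choose j) * (∑ i ∈ Iic d, n.choose i) ^ k := by
    have hgraphs : {E | ∃ g ∈ Fclass H k, E = graphOf g ∩ range P} =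
        {E | ∃ c ∈ graphs (Fclass H k), E = c ∩ range P} := by
      simp [graphs]
    calc _ ≤ #(traceFamily P (graphs (Fclass H k))) :=
          hgraphs ▸ ncard_inter_range_le_card_traceFamily P _
      _ ≤ #(univ.filter fun B : Finset (Fin n) => #B ≤ #(Finset.Icc 1 k)) *
            #(traceFamily P (graphs H)) ^ #(Finset.Icc 1 k) :=
          card_le_card_mul_pow_of_monotone_selection hx
            fun _ => exists_monotone_selection_of_mem_traceFamily_Fclass
      _ ≤ _ := by
          rw [Nat.card_Icc, add_tsub_cancel_right]
          gcongr
          · simpa using card_le_sum_choose_of_vcDim_le (vcDim_filter_card_le (α := Fin n) k)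
          · simpa using card_le_sum_choose_of_vcDim_le (vcDim_traceFamily_le hP hdim_le)
  calc _ ≤ ((∑ j ∈ Iic k, (n.choose j : ℝ)) * (∑ i ∈ Iic d, (n.choose i : ℝ)) ^ k) := by
        exact_mod_cast hcount
    _ ≤ (Real.exp 1 * n / k) ^ k * ((Real.exp 1 * n / d) ^ d) ^ k := by
        gcongr
        · exact sum_choose_le_exp_one_mul_div_pow hk hkn
        · exact sum_choose_le_exp_one_mul_div_pow hd hdn
    _ = _ := by ring

/-- If `H` has graph dimension `d` (`0 < d < ∞`) and `k ≥ 1`, then for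
`n ≥ max(d, k)` distinct points `x₁, …, xₙ ∈ ℝ` and values `y₁, …, yₙ ∈ Y`, the number of
distinct sets `{(x, g(x)) : x ∈ ℝ} ∩ {(x₁,y₁), …, (xₙ,yₙ)}` realized by `g ∈ F_k(H)` is at
most `(en/d)^(dk) · (en/k)^k`. -/
theorem growth_of_piecewise_class
    {Y : Type*} [MeasurableSpace Y] [Nonempty Y]
    (H : Set (ℝ → Y)) (hHne : H.Nonempty)
    (d : ℕ) (hd : 0 < d)
    (hdim_le : ∀ S : Finset (ℝ × Y), ShattersC (graphs H) S → S.card ≤ d)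
    (hdim_ge : ∃ S : Finset (ℝ × Y), S.card = d ∧ ShattersC (graphs H) S)
    (k : ℕ) (hk : 1 ≤ k)
    (n : ℕ) (hn : max d k ≤ n)
    (x : Fin n → ℝ) (hx : Function.Injective x) (y : Fin n → Y) :
    (({E : Set (ℝ × Y) | ∃ g ∈ Fclass H k,
        E = graphOf g ∩ Set.range (fun i => (x i, y i))}.ncard : ℝ))
      ≤ (Real.exp 1 * n / d) ^ (d * k) * (Real.exp 1 * n / k) ^ k :=
  growth_of_piecewise_class_general H d hd hdim_le k hk n hn x hx y
end

section
/- Suppose H has finite graph dimension d with 0 < d < ∞, and let k ∈ ℕ with k ≥ 1. Then the graph dimension of F_k(H) is at most 4·d·k·log₂(2ek). -/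
open MeasureTheory Set

/-!
The trace of a `k`-piecewise function on a finite set `S ⊆ ℝ × Y` of `m` points is determined by
where its `k - 1` thresholds fall among the first coordinates of `S` (at most `(m + 1) ^ (k - 1)`
possibilities) and by the traces of its `k` pieces, each one of the at most
`∑_{i ≤ d} C(m, i) ≤ (e m / d) ^ d` traces of `H` on `S` (Sauer–Shelah). If `F_k(H)` shatters `S`,
this gives `2 ^ m ≤ (e m / d) ^ (2 d k)`, and comparing `log` with its tangent line at the
target value solves this for `m`.
-/

open Finset Real

noncomputable section

open scoped Classical

variable {Y : Type*}

def graphTrace (S : Finset (ℝ × Y)) (g : ℝ → Y) : Finset (ℝ × Y) := {p ∈ S | p.2 = g p.1}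

def graphTraces (G : Set (ℝ → Y)) (S : Finset (ℝ × Y)) : Finset (Finset (ℝ × Y)) :=
  {T ∈ S.powerset | ∃ g ∈ G, graphTrace S g = T}

lemma coe_graphTrace (S : Finset (ℝ × Y)) (g : ℝ → Y) :
    (graphTrace S g : Set (ℝ × Y)) = ↑S ∩ graphOf g := by
  ext p
  simp [graphTrace, graphOf]

lemma graphTrace_mem_graphTraces {G : Set (ℝ → Y)} {g : ℝ → Y} (hg : g ∈ G) (S : Finset (ℝ × Y)) :
    graphTrace S g ∈ graphTraces G S :=
  mem_filter.2 ⟨mem_powerset.2 (filter_subset _ _), g, hg, rfl⟩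

lemma ShattersC.graphTraces_eq_powerset {G : Set (ℝ → Y)} {S : Finset (ℝ × Y)}
    (hS : ShattersC (graphs G) S) : graphTraces G S = S.powerset := by
  refine (filter_subset _ _).antisymm fun T hT => ?_
  obtain ⟨_, ⟨g, hg, rfl⟩, hgT⟩ := hS T (mem_powerset.1 hT)
  rw [← coe_graphTrace, coe_inj] at hgT
  exact hgT ▸ graphTrace_mem_graphTraces hg S

lemma shattersC_graphs_of_shatters_graphTraces {G : Set (ℝ → Y)} {S B : Finset (ℝ × Y)}
    (hB : (graphTraces G S).Shatters B) : ShattersC (graphs G) B := by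
  obtain ⟨_, hu, hBu⟩ := hB.exists_superset
  have hBS : B ⊆ S := hBu.trans (mem_powerset.1 (mem_filter.1 hu).1)
  intro T hT
  obtain ⟨_, hu, rfl⟩ := hB hT
  obtain ⟨-, g, hg, rfl⟩ := mem_filter.1 hu
  refine ⟨graphOf g, ⟨g, hg, rfl⟩, ?_⟩
  rw [coe_inter, coe_graphTrace, ← Set.inter_assoc, Set.inter_eq_left.2 (coe_subset.2 hBS)]

lemma Finset.card_le_sum_range_choose_of_shatters_card_le {α : Type*} [DecidableEq α]
    {𝒜 : Finset (Finset α)} {S : Finset α} {d : ℕ} (h𝒜 : ∀ A ∈ 𝒜, A ⊆ S)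
    (hd : ∀ B, 𝒜.Shatters B → #B ≤ d) :
    #𝒜 ≤ ∑ i ∈ range (d + 1), (#S).choose i := by
  refine (card_le_card_shatterer 𝒜).trans ?_
  simp_rw [← card_powersetCard]
  refine (card_le_card fun B hB ↦ mem_biUnion.2 ⟨#B, ?_⟩).trans card_biUnion_le
  rw [mem_shatterer] at hB
  obtain ⟨A, hA, hBA⟩ := hB.exists_superset
  exact ⟨mem_range.2 (Nat.lt_succ_of_le (hd B hB)), mem_powersetCard.2 ⟨hBA.trans (h𝒜 A hA), rfl⟩⟩

lemma card_graphTraces_le_sum_range_choose {H : Set (ℝ → Y)} {d : ℕ}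
    (hdim : ∀ B : Finset (ℝ × Y), ShattersC (graphs H) B → #B ≤ d) (S : Finset (ℝ × Y)) :
    #(graphTraces H S) ≤ ∑ i ∈ range (d + 1), (#S).choose i :=
  card_le_sum_range_choose_of_shatters_card_le (fun _ hA => mem_powerset.1 (mem_filter.1 hA).1)
    fun _ hB => hdim _ (shattersC_graphs_of_shatters_graphTraces hB)

lemma Monotone.card_filter_lt_mem_Ioc {α : Type*} [LinearOrder α] {t : ℕ → α} (ht : Monotone t)
    {N : ℕ} {x : α} (h0 : t 0 < x) (hN : x ≤ t (N + 1)) :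
    x ∈ Set.Ioc (t #{j : Fin N | t (j + 1) < x}) (t (#{j : Fin N | t (j + 1) < x} + 1)) := by
  set n := #{j : Fin N | t (j + 1) < x}
  have hsorted : Monotone fun j : Fin N => t (j + 1) := fun i j hij => ht (by simpa using hij)
  have hnN : n ≤ N := (card_le_univ _).trans_eq (Fintype.card_fin N)
  constructor
  · rcases Nat.eq_zero_or_pos n with hn | hn
    · rwa [hn]
    · have := (Tuple.lt_card_lt_iff_apply_lt_of_monotone hsorted (a := x)
        (j := ⟨n - 1, by omega⟩)).1 (by simp only; omega)
      rwa [Nat.sub_add_cancel hn] at this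
  · rcases hnN.lt_or_eq with hn | hn
    · exact not_lt.1 fun h => lt_irrefl n
        ((Tuple.lt_card_lt_iff_apply_lt_of_monotone hsorted (a := x) (j := ⟨n, hn⟩)).2 h)
    · rwa [hn]

lemma exists_pieces_of_mem_Fclass {H : Set (ℝ → Y)} {N : ℕ} {f : ℝ → Y}
    (hf : f ∈ Fclass H (N + 1)) :
    ∃ (t : ℕ → EReal) (g : ℕ → ℝ → Y), (∀ i ≤ N, g i ∈ H) ∧
      ∀ x : ℝ, f x = g #{j : Fin N | t (j + 1) < x} x := by
  obtain ⟨t, h, ht0, htN, hmono, -, hH, hpiece⟩ := hf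
  refine ⟨t, fun i => h (i + 1), fun i hi => hH _ (by omega) (by omega), fun x => ?_⟩
  obtain ⟨hlt, hle⟩ := (monotone_nat_of_le_succ hmono).card_filter_lt_mem_Ioc (N := N)
    (x := (x : EReal)) (by simp [ht0]) (by simp [htN])
  have hnN : #{j : Fin N | t (j + 1) < x} ≤ N := (card_le_univ _).trans_eq (Fintype.card_fin N)
  exact hpiece x _ (by omega) (by omega) (by simpa using hlt) hle

lemma lt_iff_card_filter_le_lt {α β : Type*} [LinearOrder β] (φ : α → β) {S : Finset α} {p : α}
    (hp : p ∈ S) (τ : β) :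
    τ < φ p ↔ #{q ∈ S | φ q ≤ τ} < #{q ∈ S | φ q ≤ φ p} := by
  constructor
  · intro h
    refine card_lt_card ⟨monotone_filter_right S fun q _ hq => hq.trans h.le, fun hsub => ?_⟩
    exact (mem_filter.1 (hsub (mem_filter.2 ⟨hp, le_rfl⟩))).2.not_gt h
  · intro h
    by_contra! hle
    exact h.not_ge (card_le_card (monotone_filter_right S fun q _ hq => hq.trans hle))

lemma card_graphTraces_Fclass_le (H : Set (ℝ → Y)) (N : ℕ) (S : Finset (ℝ × Y)) :
    #(graphTraces (Fclass H (N + 1)) S) ≤ (#S + 1) ^ N * #(graphTraces H S) ^ (N + 1) := by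
  let rank (p : ℝ × Y) : ℕ := #{q ∈ S | (q.1 : EReal) ≤ p.1}
  let R (cP : (Fin N → Fin (#S + 1)) × (Fin (N + 1) → Finset (ℝ × Y))) : Finset (ℝ × Y) :=
    {p ∈ S | p ∈ cP.2 ⟨#{j | (cP.1 j : ℕ) < rank p},
      Nat.lt_succ_of_le ((card_le_univ _).trans_eq (Fintype.card_fin N))⟩}
  have hsub : graphTraces (Fclass H (N + 1)) S ⊆
      (Finset.univ ×ˢ Fintype.piFinset fun _ => graphTraces H S).image R := by
    intro T hT
    obtain ⟨-, f, hf, rfl⟩ := mem_filter.1 hT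
    obtain ⟨t, g, hg, hfg⟩ := exists_pieces_of_mem_Fclass hf
    -- `c j` locates threshold `j + 1` among the points of `S`, which is all `R` needs to
    -- know which piece of `f` is used at each point of `S`.
    let c (j : Fin N) : Fin (#S + 1) :=
      ⟨#{q ∈ S | (q.1 : EReal) ≤ t (j + 1)}, Nat.lt_succ_of_le (card_filter_le _ _)⟩
    refine mem_image.2 ⟨(c, fun i : Fin (N + 1) => graphTrace S (g i)),
      mem_product.2 ⟨mem_univ _,
        Fintype.mem_piFinset.2 fun i => graphTrace_mem_graphTraces (hg i i.is_le) S⟩, ?_⟩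
    ext p
    simp only [R, graphTrace, mem_filter, and_congr_right_iff]
    intro hp
    have hpiece : #{j | (c j : ℕ) < rank p} = #{j : Fin N | t (j + 1) < p.1} :=
      congrArg card <| filter_congr fun j _ =>
        (lt_iff_card_filter_le_lt (fun q : ℝ × Y => (q.1 : EReal)) hp _).symm
    rw [hpiece, ← hfg, and_iff_right hp]
  calc #(graphTraces (Fclass H (N + 1)) S) ≤ _ := card_le_card hsub
    _ ≤ _ := card_image_le
    _ = _ := by simp

lemma sum_range_choose_le_exp_mul_div_pow {m d : ℕ} (hd : 0 < d) (hdm : d ≤ m) :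
    ∑ i ∈ range (d + 1), (m.choose i : ℝ) ≤ (exp 1 * m / d) ^ d := by
  have hm : (0 : ℝ) < m := by exact_mod_cast hd.trans_le hdm
  set x : ℝ := d / m
  have hx0 : 0 < x := by positivity
  have hx1 : x ≤ 1 := div_le_one_of_le₀ (by exact_mod_cast hdm) hm.le
  have key : (∑ i ∈ range (d + 1), (m.choose i : ℝ)) * x ^ d ≤ exp 1 ^ d :=
    calc (∑ i ∈ range (d + 1), (m.choose i : ℝ)) * x ^ d
        = ∑ i ∈ range (d + 1), x ^ d * m.choose i := by rw [sum_mul]; simp_rw [mul_comm]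
      _ ≤ ∑ i ∈ range (d + 1), x ^ i * m.choose i := by
          refine sum_le_sum fun i hi => mul_le_mul_of_nonneg_right ?_ (by positivity)
          exact pow_le_pow_of_le_one hx0.le hx1 (Nat.lt_succ_iff.1 (mem_range.1 hi))
      _ ≤ ∑ i ∈ range (m + 1), x ^ i * m.choose i := by gcongr
      _ = (x + 1) ^ m := by simp [add_pow]
      _ ≤ exp x ^ m := by gcongr; linarith [add_one_le_exp x]
      _ = exp 1 ^ d := by rw [← exp_nat_mul, ← exp_nat_mul, mul_div_cancel₀ _ hm.ne', mul_one]
  rwa [← le_div_iff₀ (by positivity), ← div_pow, div_div_eq_mul_div] at key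

lemma le_four_mul_logb_of_mul_log_two_le {s k : ℝ} (hs : 0 < s) (hk : 1 ≤ k)
    (h : s * log 2 ≤ 2 * k * (1 + log s)) : s ≤ 4 * k * logb 2 (2 * exp 1 * k) := by
  have hlog2 := log_two_gt_d9
  have he := exp_one_gt_d9
  have hL : log (2 * exp 1 * k) = log 2 + 1 + log k := by
    rw [log_mul (by positivity) (by positivity), log_mul two_ne_zero (exp_pos 1).ne', log_exp]
  set L := log (2 * exp 1 * k)
  have hlogk : log k ≤ k - 1 := log_le_sub_one_of_pos (by linarith)
  have hL1 : 1 < L := by linarith [log_nonneg hk]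
  have he2 : 1.88 < exp 1 * log 2 := by nlinarith
  -- uses `(e - 1) log 2 > 1`
  have hLk : L ≤ exp 1 * k * log 2 := by
    nlinarith [mul_nonneg (sub_nonneg.2 hk) (sub_nonneg.2 he2.le)]
  -- `a` is the claimed bound on `s`; the tangent line of `log` at `a` linearises `h`.
  set a := 4 * k * L / log 2
  have ha : 0 < a := by positivity
  have hloga : log a ≤ 2 * L - 1 := by
    rw [log_le_iff_le_exp ha, exp_sub, two_mul, exp_add, exp_log (by positivity),
      div_le_div_iff₀ (by positivity) (exp_pos 1)]
    nlinarith
  have htangent : log s ≤ log a + s / a - 1 := by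
    have := log_le_sub_one_of_pos (div_pos hs ha)
    rw [log_div hs.ne' ha.ne'] at this
    linarith
  have hkey : s * log 2 ≤ 2 * k * (2 * L - 1) + s * log 2 / (2 * L) :=
    calc s * log 2 ≤ 2 * k * (1 + log s) := h
      _ ≤ 2 * k * (2 * L - 1 + s / a) := mul_le_mul_of_nonneg_left (by linarith) (by positivity)
      _ = 2 * k * (2 * L - 1) + s * log 2 / (2 * L) := by simp only [a]; field_simp; ring
  have hmul : s * log 2 * (2 * L - 1) ≤ 4 * k * L * (2 * L - 1) := by
    have := mul_le_mul_of_nonneg_right hkey (by positivity : (0 : ℝ) ≤ 2 * L)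
    rw [add_mul, div_mul_cancel₀ _ (by positivity)] at this
    linarith
  rw [logb, ← mul_div_assoc, le_div_iff₀ (by positivity)]
  exact le_of_mul_le_mul_right hmul (by linarith)

lemma one_le_mul_logb_two_mul_exp_one_mul {k : ℝ} (hk : 1 ≤ k) :
    1 ≤ k * logb 2 (2 * exp 1 * k) := by
  have hlogb : 1 ≤ logb 2 (2 * exp 1 * k) := by
    rw [le_logb_iff_rpow_le one_lt_two (by positivity), rpow_one]
    nlinarith [add_one_le_exp 1]
  nlinarith

lemma le_four_mul_logb_of_two_pow_le {m d k : ℕ} (hd : 0 < d) (hdm : d ≤ m) (hk : 1 ≤ k)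
    (h : 2 ^ m ≤ (∑ i ∈ range (d + 1), m.choose i) ^ (2 * k)) :
    (m : ℝ) ≤ 4 * d * k * logb 2 (2 * exp 1 * k) := by
  have hd' : (0 : ℝ) < d := by exact_mod_cast hd
  set s : ℝ := m / d
  have hs : 0 < s := div_pos (by exact_mod_cast hd.trans_le hdm) hd'
  have hm : (m : ℝ) = d * s := (mul_div_cancel₀ _ hd'.ne').symm
  have hpow : (2 : ℝ) ^ m ≤ (exp 1 * s) ^ (d * (2 * k)) :=
    calc (2 : ℝ) ^ m ≤ (∑ i ∈ range (d + 1), (m.choose i : ℝ)) ^ (2 * k) := by exact_mod_cast h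
      _ ≤ ((exp 1 * m / d) ^ d) ^ (2 * k) := by
          gcongr; exact sum_range_choose_le_exp_mul_div_pow hd hdm
      _ = _ := by rw [← pow_mul, mul_div_assoc]
  have hlog := log_le_log (by positivity) hpow
  rw [log_pow, log_pow, log_mul (exp_pos 1).ne' hs.ne', log_exp, hm] at hlog
  push_cast at hlog
  have hs' : s * log 2 ≤ 2 * k * (1 + log s) := by
    refine le_of_mul_le_mul_left ?_ hd'
    linarith
  calc (m : ℝ) = d * s := hm
    _ ≤ d * (4 * k * logb 2 (2 * exp 1 * k)) := by
        gcongr; exact le_four_mul_logb_of_mul_log_two_le hs (by exact_mod_cast hk) hs'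
    _ = _ := by ring

end

theorem graph_dimension_piecewise_le_general
    {Y : Type*}
    (H : Set (ℝ → Y))
    (d : ℕ) (hd : 0 < d)
    (hdim_le : ∀ S : Finset (ℝ × Y), ShattersC (graphs H) S → S.card ≤ d)
    (k : ℕ) (hk : 1 ≤ k) :
    ∀ S : Finset (ℝ × Y), ShattersC (graphs (Fclass H k)) S →
      (S.card : ℝ) ≤ 4 * d * k * Real.logb 2 (2 * Real.exp 1 * k) := by
  intro S hS
  rcases lt_or_ge #S d with hSd | hdS
  · calc (#S : ℝ) ≤ d * 1 := by rw [mul_one]; exact_mod_cast hSd.le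
      _ ≤ d * (4 * (k * logb 2 (2 * exp 1 * k))) := by
          gcongr; linarith [one_le_mul_logb_two_mul_exp_one_mul (k := k) (by exact_mod_cast hk)]
      _ = _ := by ring
  · obtain ⟨N, rfl⟩ := Nat.exists_eq_add_of_le' hk
    set B := ∑ i ∈ range (d + 1), (#S).choose i
    have hSB : #S + 1 ≤ B := by
      calc #S + 1 = ∑ i ∈ range 2, (#S).choose i := by simp [sum_range_succ, add_comm]
        _ ≤ B := sum_le_sum_of_subset (range_subset_range.2 (by omega))
    refine le_four_mul_logb_of_two_pow_le hd hdS hk ?_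
    calc 2 ^ #S = #(graphTraces (Fclass H (N + 1)) S) := by
          rw [hS.graphTraces_eq_powerset, card_powerset]
      _ ≤ (#S + 1) ^ N * #(graphTraces H S) ^ (N + 1) := card_graphTraces_Fclass_le H N S
      _ ≤ B ^ N * B ^ (N + 1) := by
          gcongr; exact card_graphTraces_le_sum_range_choose hdim_le S
      _ ≤ B ^ (2 * (N + 1)) := by
          rw [← pow_add]; exact Nat.pow_le_pow_right (by omega) (by omega)

/-- If `H` has graph dimension `d` (`0 < d < ∞`) and `k ≥ 1`, then the
graph dimension of `F_k(H)` is at most `4·d·k·log₂(2ek)`: every finite subset of `ℝ × Y`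
shattered by the graphs of `F_k(H)` has at most `4·d·k·log₂(2ek)` points. -/
theorem graph_dimension_piecewise_le
    {Y : Type*} [MeasurableSpace Y] [Nonempty Y]
    (H : Set (ℝ → Y)) (hHne : H.Nonempty)
    (d : ℕ) (hd : 0 < d)
    (hdim_le : ∀ S : Finset (ℝ × Y), ShattersC (graphs H) S → S.card ≤ d)
    (hdim_ge : ∃ S : Finset (ℝ × Y), S.card = d ∧ ShattersC (graphs H) S)
    (k : ℕ) (hk : 1 ≤ k) :
    ∀ S : Finset (ℝ × Y), ShattersC (graphs (Fclass H k)) S →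
      (S.card : ℝ) ≤ 4 * d * k * Real.logb 2 (2 * Real.exp 1 * k) :=
  graph_dimension_piecewise_le_general H d hd hdim_le k hk
end

section
/- Let n ∈ ℕ and let f : ℝ → {0,1} be the indicator function of a union of n+1 closed intervals. Then there exists a function g : ℝ → {0,1} that is the indicator function of a union of n closed intervals such that dist(f, g) ≤ 1/(n+1), where dist is measured under the uniform distribution on (0,1). -/
open MeasureTheory Set

/-!
Let `Eᵢ ⊆ (0,1)` be the set of points covered by the `i`-th interval and by no other one.
Deleting the `i`-th interval changes the indicator function exactly on `Eᵢ`; since the `n + 1`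
sets `Eᵢ` are disjoint subsets of `(0,1)`, one of them has measure at most `1/(n+1)`.
-/

open Function
open scoped symmDiff

theorem MeasureTheory.exists_measureReal_le_div_card {α ι : Type*} [MeasurableSpace α]
    (μ : Measure α) [IsFiniteMeasure μ] [Fintype ι] [Nonempty ι] {s : ι → Set α}
    (hs : ∀ i, MeasurableSet (s i)) (hd : Pairwise (Disjoint on s)) :
    ∃ i, μ.real (s i) ≤ μ.real univ / Fintype.card ι := by
  have hsum : ∑ i, μ.real (s i) ≤ ∑ _i : ι, μ.real univ / Fintype.card ι := by
    rw [← measureReal_iUnion_fintype hd hs, Finset.sum_const, Finset.card_univ, nsmul_eq_mul,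
      mul_div_cancel₀ _ (by positivity)]
    exact measureReal_mono (subset_univ _)
  obtain ⟨i, -, hi⟩ := Finset.exists_le_of_sum_le Finset.univ_nonempty hsum
  exact ⟨i, hi⟩

theorem Set.setOf_indicator_const_ne_eq_symmDiff {α M : Type*} [Zero M] {c : M} (hc : c ≠ 0)
    (s t : Set α) : {x | s.indicator (fun _ => c) x ≠ t.indicator (fun _ => c) x} = s ∆ t := by
  ext x
  by_cases hs : x ∈ s <;> by_cases ht : x ∈ t <;> simp [mem_symmDiff, hs, ht, hc, hc.symm]

section SuccAbove

variable {α : Type*} {n : ℕ} (s : Fin (n + 1) → Set α)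

theorem Fin.iUnion_symmDiff_iUnion_succAbove (i : Fin (n + 1)) :
    (⋃ j, s j) ∆ (⋃ j, s (i.succAbove j)) = s i \ ⋃ j, s (i.succAbove j) := by
  ext x
  simp only [mem_symmDiff, mem_sdiff, mem_iUnion, Fin.exists_iff_succAbove i]
  tauto

theorem Fin.pairwise_disjoint_diff_iUnion_succAbove :
    Pairwise (Disjoint on fun i => s i \ ⋃ j, s (i.succAbove j)) := by
  intro i k hik
  obtain ⟨j, rfl⟩ := Fin.exists_succAbove_eq hik.symm
  exact disjoint_left.2 fun x hx hx' => hx.2 (mem_iUnion_of_mem j hx'.1)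

end SuccAbove

theorem distP_indicator_const {M : Type*} [Zero M] {c : M} (hc : c ≠ 0) (s t : Set ℝ) :
    distP (s.indicator fun _ => c) (t.indicator fun _ => c) =
      (volume.restrict (Ioo 0 1)).real (s ∆ t) := by
  rw [distP, measureReal_restrict_apply' measurableSet_Ioo, inter_comm,
    ← setOf_indicator_const_ne_eq_symmDiff hc]
  rfl

/-- If `f` is the indicator function of a union of `n+1` closed
intervals, then there is an indicator function `g` of a union of `n` closed intervals
with `dist(f, g) ≤ 1/(n+1)` under the uniform distribution on `(0,1)`. -/
theorem union_of_intervals_reduce_one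
    (n : ℕ) (a b : Fin (n + 1) → ℝ) :
    ∃ c d : Fin n → ℝ,
      distP ((⋃ i, Set.Icc (a i) (b i)).indicator (fun _ => (1:ℝ)))
            ((⋃ i, Set.Icc (c i) (d i)).indicator (fun _ => (1:ℝ)))
        ≤ 1 / ((n : ℝ) + 1) := by
  let I i := Icc (a i) (b i)
  obtain ⟨i, hi⟩ := exists_measureReal_le_div_card (volume.restrict (Ioo (0 : ℝ) 1))
    (s := fun i => I i \ ⋃ j, I (i.succAbove j))
    (fun i => measurableSet_Icc.diff (.iUnion fun _ => measurableSet_Icc))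
    (Fin.pairwise_disjoint_diff_iUnion_succAbove I)
  refine ⟨fun j => a (i.succAbove j), fun j => b (i.succAbove j), ?_⟩
  rw [distP_indicator_const one_ne_zero, Fin.iUnion_symmDiff_iUnion_succAbove I]
  simpa using hi
end
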